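/- arXiv:2004.10626 — 9 statements merged into one kernel-verified Lean document; each statement's English description precedes it below -/
import Mathlib

section
/- Fix an integer N ≥ 1, a constant C₀ > 0 and β ∈ (0,1). Then there exists L₀ > 0 such that for all L ≥ L₀ the following holds: let D be an N×N real matrix with operator norm ‖D‖ ≤ C₀·L and |det D| ≥ L^{N-(1-β)}, and let A : ℝ^N × ℝ^N → ℝ^N × ℝ^N be the block linear map A(u,v) = (Du − v, u). Then for every w = (u,v) with ‖v‖ ≤ (1/10)‖u‖, the image A(w) again lies in the cone C^x_{1/10} and ‖A(w)‖ ≥ L^{2β/3}·‖w‖. -/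
/-!
Cramer's rule `det D • u = adj D (D u)`, with every entry of the adjugate bounded by
`(N-1)! ‖D‖^(N-1)`, gives `|det D| ‖u‖ ≲ ‖D‖^(N-1) ‖D u‖`, hence `‖D u‖ ≳ L^β ‖u‖` under the
two hypotheses on `D`. In the cone `v` is negligible next to `u`, so the first component
`D u - v` of `A (u, v)` dominates both `u` and `‖(u, v)‖` as soon as `L^β` beats a constant
multiple of `L^(2β/3)`.
-/

namespace OrthonormalBasis

variable {ι E : Type*} [Fintype ι] [NormedAddCommGroup E] [InnerProductSpace ℝ E]
  (b : OrthonormalBasis ι ℝ E)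

lemma abs_repr_apply_le (x : E) (i : ι) : |b.repr x i| ≤ ‖x‖ := by
  simpa [b.repr_apply_apply] using abs_real_inner_le_norm (b i) x

variable [DecidableEq ι]

lemma abs_toMatrix_apply_le (D : E →L[ℝ] E) (i j : ι) :
    |LinearMap.toMatrix b.toBasis b.toBasis D i j| ≤ ‖D‖ := by
  rw [LinearMap.toMatrix_apply, b.coe_toBasis_repr_apply, b.coe_toBasis]
  calc |b.repr (D (b j)) i| ≤ ‖D (b j)‖ := b.abs_repr_apply_le _ i
    _ ≤ ‖D‖ * ‖b j‖ := D.le_opNorm _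
    _ = ‖D‖ := by rw [b.norm_eq_one, mul_one]

lemma norm_toLin_apply_le (A : Matrix ι ι ℝ) {c : ℝ} (hA : ∀ i j, |A i j| ≤ c) (x : E) :
    ‖Matrix.toLin b.toBasis b.toBasis A x‖ ≤ Fintype.card ι ^ 2 * c * ‖x‖ := by
  have hrow : ∀ i, |(A.mulVec (b.toBasis.repr x)) i| ≤ Fintype.card ι * c * ‖x‖ := fun i =>
    calc |∑ j, A i j * b.repr x j| ≤ ∑ j, |A i j| * |b.repr x j| := by
          simp only [← abs_mul]; exact Finset.abs_sum_le_sum_abs _ _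
      _ ≤ ∑ _j : ι, c * ‖x‖ := Finset.sum_le_sum fun j _ =>
          mul_le_mul (hA i j) (b.abs_repr_apply_le x j) (abs_nonneg _)
            ((abs_nonneg _).trans (hA i j))
      _ = Fintype.card ι * c * ‖x‖ := by simp [mul_assoc]
  calc ‖Matrix.toLin b.toBasis b.toBasis A x‖
      ≤ ∑ i, ‖(A.mulVec (b.toBasis.repr x)) i • b.toBasis i‖ := by
        rw [Matrix.toLin_apply]; exact norm_sum_le _ _
    _ ≤ ∑ _i : ι, Fintype.card ι * c * ‖x‖ := Finset.sum_le_sum fun i _ => by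
        simpa [norm_smul, b.norm_eq_one] using hrow i
    _ = Fintype.card ι ^ 2 * c * ‖x‖ := by simp; ring

end OrthonormalBasis

open Nat in
theorem ContinuousLinearMap.abs_det_mul_norm_le {E : Type*} [NormedAddCommGroup E]
    [InnerProductSpace ℝ E] [FiniteDimensional ℝ E] {n : ℕ} (hE : Module.finrank ℝ E = n + 1)
    (D : E →L[ℝ] E) (u : E) :
    |LinearMap.det (D : E →ₗ[ℝ] E)| * ‖u‖ ≤ (n + 1) ^ 2 * (n ! * ‖D‖ ^ n) * ‖D u‖ := by
  let b := (stdOrthonormalBasis ℝ E).reindex (finCongr hE)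
  set M := LinearMap.toMatrix b.toBasis b.toBasis D
  have hadj : ∀ i j, |M.adjugate i j| ≤ n ! * ‖D‖ ^ n := fun i j => by
    rw [Matrix.adjugate_fin_succ_eq_det_submatrix, abs_mul, abs_pow, abs_neg, abs_one, one_pow,
      one_mul]
    simpa using Matrix.det_le (A := M.submatrix j.succAbove i.succAbove) (abv := AbsoluteValue.abs)
      fun _ _ => b.abs_toMatrix_apply_le D _ _
  have hinv : Matrix.toLin b.toBasis b.toBasis M.adjugate ∘ₗ D = M.det • LinearMap.id := by
    rw [← Matrix.toLin_toMatrix b.toBasis b.toBasis (D : E →ₗ[ℝ] E), ← Matrix.toLin_mul,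
      Matrix.adjugate_mul, map_smul, Matrix.toLin_one]
  calc |LinearMap.det (D : E →ₗ[ℝ] E)| * ‖u‖
        = ‖Matrix.toLin b.toBasis b.toBasis M.adjugate (D u)‖ := by
        rw [← LinearMap.det_toMatrix b.toBasis, ← Real.norm_eq_abs, ← norm_smul]
        exact congrArg norm (LinearMap.congr_fun hinv u).symm
    _ ≤ (n + 1) ^ 2 * (n ! * ‖D‖ ^ n) * ‖D u‖ := by
        simpa using b.norm_toLin_apply_le _ hadj (D u)

open Nat in
theorem ContinuousLinearMap.rpow_mul_norm_le_of_rpow_le_abs_det {E : Type*}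
    [NormedAddCommGroup E] [InnerProductSpace ℝ E] [FiniteDimensional ℝ E] {n : ℕ}
    (hE : Module.finrank ℝ E = n + 1) {C₀ L β : ℝ} (hL : 0 < L) (D : E →L[ℝ] E)
    (hD : ‖D‖ ≤ C₀ * L) (hdet : L ^ ((n : ℝ) + β) ≤ |LinearMap.det (D : E →ₗ[ℝ] E)|) (u : E) :
    L ^ β * ‖u‖ ≤ (n + 1) ^ 2 * (n ! * C₀ ^ n) * ‖D u‖ := by
  refine le_of_mul_le_mul_left ?_ (pow_pos hL n)
  calc L ^ n * (L ^ β * ‖u‖) = L ^ ((n : ℝ) + β) * ‖u‖ := by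
        rw [Real.rpow_add hL, Real.rpow_natCast, mul_assoc]
    _ ≤ |LinearMap.det (D : E →ₗ[ℝ] E)| * ‖u‖ := by gcongr
    _ ≤ (n + 1) ^ 2 * (n ! * ‖D‖ ^ n) * ‖D u‖ := D.abs_det_mul_norm_le hE u
    _ ≤ (n + 1) ^ 2 * (n ! * (C₀ * L) ^ n) * ‖D u‖ := by gcongr
    _ = L ^ n * ((n + 1) ^ 2 * (n ! * C₀ ^ n) * ‖D u‖) := by ring

lemma Real.mul_two_mul_rpow_add_le_rpow {K β L : ℝ} (hK : 1 ≤ K) (hβ : 0 < β)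
    (hL : (13 * K) ^ (3 / β) ≤ L) : K * (2 * L ^ (2 / 3 * β) + 11) ≤ L ^ β := by
  have hL1 : 1 ≤ L := (Real.one_le_rpow (by linarith) (by positivity)).trans hL
  have hx : 1 ≤ L ^ (2 / 3 * β) := Real.one_le_rpow hL1 (by positivity)
  have hLβ3 : 13 * K ≤ L ^ (β / 3) := by
    calc 13 * K = ((13 * K) ^ (3 / β)) ^ (β / 3) := by
          rw [← Real.rpow_mul (by linarith), div_mul_div_cancel₀' three_ne_zero, div_self hβ.ne',
            Real.rpow_one]
      _ ≤ L ^ (β / 3) := by gcongr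
  calc K * (2 * L ^ (2 / 3 * β) + 11) ≤ 13 * K * L ^ (2 / 3 * β) := by nlinarith
    _ ≤ L ^ (β / 3) * L ^ (2 / 3 * β) := by gcongr
    _ = L ^ β := by rw [← Real.rpow_add (by linarith)]; ring_nf

theorem norm_le_and_mul_sqrt_le_of_norm_le {E : Type*} [SeminormedAddCommGroup E] {a b w : E}
    {x : ℝ} (hx : 0 ≤ x) (hb : ‖b‖ ≤ 1 / 10 * ‖a‖) (hw : (2 * x + 11) * ‖a‖ ≤ ‖w‖) :
    ‖a‖ ≤ 1 / 10 * ‖w - b‖ ∧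
      x * Real.sqrt (‖a‖ ^ 2 + ‖b‖ ^ 2) ≤ Real.sqrt (‖w - b‖ ^ 2 + ‖a‖ ^ 2) := by
  have hwb : (2 * x + 10) * ‖a‖ ≤ ‖w - b‖ := by
    linarith [norm_sub_norm_le w b, norm_nonneg a]
  refine ⟨by nlinarith [norm_nonneg a], ?_⟩
  have hab : Real.sqrt (‖a‖ ^ 2 + ‖b‖ ^ 2) ≤ 11 / 10 * ‖a‖ :=
    Real.sqrt_le_iff.mpr ⟨by positivity, by nlinarith [norm_nonneg b]⟩
  calc x * Real.sqrt (‖a‖ ^ 2 + ‖b‖ ^ 2) ≤ x * (11 / 10 * ‖a‖) := by gcongr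
    _ ≤ ‖w - b‖ := by nlinarith [norm_nonneg a]
    _ ≤ Real.sqrt (‖w - b‖ ^ 2 + ‖a‖ ^ 2) :=
        Real.le_sqrt_of_sq_le (le_add_of_nonneg_right (sq_nonneg _))

/-- Hyperbolicity lemma, part (a): for `L` large, the block map
`A(u,v) = (Du - v, u)` preserves the horizontal cone `C^x_{1/10}` and expands vectors in it
by a factor at least `L^(2β/3)`, whenever `‖D‖ ≤ C₀ L` and `|det D| ≥ L^(N-(1-β))`. -/
theorem statement0 (N : ℕ) (hN : 1 ≤ N) (C₀ : ℝ) (hC₀ : 0 < C₀)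
    (β : ℝ) (hβ : β ∈ Set.Ioo (0 : ℝ) 1) :
    ∃ L₀ : ℝ, 0 < L₀ ∧ ∀ L : ℝ, L₀ ≤ L →
      ∀ D : EuclideanSpace ℝ (Fin N) →L[ℝ] EuclideanSpace ℝ (Fin N),
        ‖D‖ ≤ C₀ * L →
        L ^ ((N : ℝ) - (1 - β)) ≤
          |LinearMap.det (D : EuclideanSpace ℝ (Fin N) →ₗ[ℝ] EuclideanSpace ℝ (Fin N))| →
        ∀ u v : EuclideanSpace ℝ (Fin N),
          ‖v‖ ≤ (1 / 10) * ‖u‖ →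
          ‖u‖ ≤ (1 / 10) * ‖D u - v‖ ∧
            L ^ ((2 / 3) * β) * Real.sqrt (‖u‖ ^ 2 + ‖v‖ ^ 2) ≤
              Real.sqrt (‖D u - v‖ ^ 2 + ‖u‖ ^ 2) := by
  obtain ⟨n, rfl⟩ : ∃ n : ℕ, N = n + 1 := ⟨N - 1, by omega⟩
  set K : ℝ := (n + 1) ^ 2 * (n.factorial * C₀ ^ n) + 1
  have hK : 1 ≤ K := le_add_of_nonneg_left (by positivity)
  refine ⟨(13 * K) ^ (3 / β), by positivity, fun L hL D hD hdet u v hv => ?_⟩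
  have hL0 : 0 < L := (Real.rpow_pos_of_pos (by linarith) _).trans_le hL
  rw [show ((n + 1 : ℕ) : ℝ) - (1 - β) = n + β by push_cast; ring] at hdet
  have hexp : L ^ β * ‖u‖ ≤ K * ‖D u‖ :=
    (D.rpow_mul_norm_le_of_rpow_le_abs_det finrank_euclideanSpace_fin hL0 hD hdet u).trans
      (by gcongr; linarith)
  have hDu : (2 * L ^ (2 / 3 * β) + 11) * ‖u‖ ≤ ‖D u‖ := by
    refine le_of_mul_le_mul_left ?_ (by linarith : 0 < K)
    calc K * ((2 * L ^ (2 / 3 * β) + 11) * ‖u‖) ≤ L ^ β * ‖u‖ := by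
          rw [← mul_assoc]; gcongr; exact Real.mul_two_mul_rpow_add_le_rpow hK hβ.1 hL
      _ ≤ K * ‖D u‖ := hexp
  exact norm_le_and_mul_sqrt_le_of_norm_le (by positivity) hv hDu
end

section
/- Fix an integer N ≥ 1, a constant C₀ > 0 and β ∈ (0,1). Then there exists L₀ > 0 such that for all L ≥ L₀ the following holds: for every N×N real matrix D with ‖D‖ ≤ C₀·L and |det D| ≥ L^{N-(1-β)}, and every linear map G : ℝ^N → ℝ^N with ‖G‖ ≤ 1/10, one has |det(D − G)| ≥ (1/2)·L^{N-(1-β)}. -/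
/-!
In an orthonormal basis `b`, `det f` is the determinant form evaluated on the columns `f (b i)`,
and by Hadamard's inequality this alternating form is bounded by the product of the norms of its
arguments. Multilinearity then makes `det` Lipschitz on operators:
`|det f - det g| ≤ N · max ‖f‖ ‖g‖ ^ (N - 1) · ‖f - g‖`. For `‖D‖, ‖D - G‖ ≤ (C₀ + 1) L` and
`‖G‖ ≤ 1/10` the perturbation is `O(L ^ (N - 1))`, which is at most half of `L ^ (N - (1 - β))`
as soon as `L ^ β` is large.
-/

open Module Filter

theorem OrthonormalBasis.abs_det_apply_le {E : Type*} [NormedAddCommGroup E]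
    [InnerProductSpace ℝ E] {n : ℕ} (b : OrthonormalBasis (Fin n) ℝ E) (v : Fin n → E) :
    |b.toBasis.det v| ≤ ∏ i, ‖v i‖ := by
  have : Fact (finrank ℝ E = n) := ⟨by simpa using finrank_eq_card_basis b.toBasis⟩
  rw [← b.toBasis.orientation.volumeForm_robust' b]
  exact Orientation.abs_volumeForm_apply_le _ v

theorem ContinuousLinearMap.abs_det_sub_det_le {E : Type*} [NormedAddCommGroup E]
    [InnerProductSpace ℝ E] [FiniteDimensional ℝ E] (f g : E →L[ℝ] E) :
    |LinearMap.det (f : E →ₗ[ℝ] E) - LinearMap.det (g : E →ₗ[ℝ] E)| ≤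
      finrank ℝ E * max ‖f‖ ‖g‖ ^ (finrank ℝ E - 1) * ‖f - g‖ := by
  set b := stdOrthonormalBasis ℝ E
  have hcol : ∀ h : E →L[ℝ] E, ‖(fun i => h (b i))‖ ≤ ‖h‖ := fun h =>
    (pi_norm_le_iff_of_nonneg (norm_nonneg h)).2 fun i =>
      (h.le_opNorm _).trans_eq (by rw [b.orthonormal.1 i, mul_one])
  have hdet : ∀ h : E →L[ℝ] E, LinearMap.det (h : E →ₗ[ℝ] E) = b.toBasis.det (fun i => h (b i)) :=
    fun h => by
      rw [← mul_one (LinearMap.det _), ← b.toBasis.det_self, ← Basis.det_comp]; rfl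
  have := b.toBasis.det.toMultilinearMap.norm_image_sub_le_of_bound zero_le_one
    (fun v => by simpa using b.abs_det_apply_le v) (fun i => f (b i)) (fun i => g (b i))
  rw [hdet, hdet, ← Real.norm_eq_abs]
  refine this.trans ?_
  simp only [one_mul, Fintype.card_fin]
  gcongr
  · exact hcol f
  · exact hcol g
  · exact hcol (f - g)

/-- Determinant lower bound in the hyperbolicity lemma (b)(ii): for `L` large,
if `‖D‖ ≤ C₀ L`, `|det D| ≥ L^(N-(1-β))` and `‖G‖ ≤ 1/10`, then
`|det (D - G)| ≥ (1/2) L^(N-(1-β))`. -/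
theorem statement2 (N : ℕ) (hN : 1 ≤ N) (C₀ : ℝ) (hC₀ : 0 < C₀)
    (β : ℝ) (hβ : β ∈ Set.Ioo (0 : ℝ) 1) :
    ∃ L₀ : ℝ, 0 < L₀ ∧ ∀ L : ℝ, L₀ ≤ L →
      ∀ D G : EuclideanSpace ℝ (Fin N) →L[ℝ] EuclideanSpace ℝ (Fin N),
        ‖D‖ ≤ C₀ * L →
        L ^ ((N : ℝ) - (1 - β)) ≤
          |LinearMap.det (D : EuclideanSpace ℝ (Fin N) →ₗ[ℝ] EuclideanSpace ℝ (Fin N))| →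
        ‖G‖ ≤ 1 / 10 →
        (1 / 2) * L ^ ((N : ℝ) - (1 - β)) ≤
          |LinearMap.det ((D - G : EuclideanSpace ℝ (Fin N) →L[ℝ] EuclideanSpace ℝ (Fin N)) :
            EuclideanSpace ℝ (Fin N) →ₗ[ℝ] EuclideanSpace ℝ (Fin N))| := by
  set K : ℝ := N * (C₀ + 1) ^ (N - 1) / 10
  obtain ⟨L₁, hL₁⟩ := eventually_atTop.1 <| (eventually_ge_atTop 1).and <|
    (tendsto_rpow_atTop hβ.1).eventually_ge_atTop (2 * K)
  refine ⟨max L₁ 1, by positivity, fun L hL D G hD hdet hG => ?_⟩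
  obtain ⟨hL, hLβ⟩ := hL₁ L (le_of_max_le_left hL)
  have hnorm : max ‖D‖ ‖D - G‖ ≤ (C₀ + 1) * L :=
    max_le (by nlinarith) ((norm_sub_le D G).trans (by linarith))
  have herr : _ ≤ K * L ^ (N - 1) :=
    calc _ ≤ _ := D.abs_det_sub_det_le (D - G)
      _ ≤ N * ((C₀ + 1) * L) ^ (N - 1) * (1 / 10) := by
          rw [finrank_euclideanSpace_fin, sub_sub_cancel]; gcongr
      _ = K * L ^ (N - 1) := by simp only [K, mul_pow]; ring
  have hexp : L ^ ((N : ℝ) - (1 - β)) = L ^ (N - 1) * L ^ β := by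
    rw [← Real.rpow_natCast, ← Real.rpow_add (by linarith), Nat.cast_sub hN]
    ring_nf
  have hsmall : K * L ^ (N - 1) ≤ 1 / 2 * L ^ ((N : ℝ) - (1 - β)) := by
    rw [hexp]
    nlinarith [pow_nonneg (by linarith : (0 : ℝ) ≤ L) (N - 1)]
  linarith [(abs_sub_abs_le_abs_sub _ _).trans herr]
end

section
/- For every integer N ≥ 1 and every δ ∈ (0, 1], the Lebesgue measure of the set S_N(δ) = {(x₁, …, x_N) ∈ [0,1]^N : x₁·x₂·…·x_N ≤ δ} equals δ · Σ_{i=0}^{N−1} (log(1/δ))^i / i!. -/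
/-!
Fubini in the first coordinate: for `0 < a ≤ 1` the slice of `S_{n+1}(δ)` at `x₀ = a` is
`S_n(δ / a)`, which is the whole cube when `a ≤ δ`. Writing `Pₙ(t) = ∑_{i<n} tⁱ / i!`, induction on
`n` (for `δ < 1`, starting from the empty set `S_0(δ)`) therefore reduces to
`∫_δ^1 (δ / a) Pₙ(log a - log δ) da = δ Pₙ₊₁(-log δ) - δ`, which holds because
`a ↦ δ Pₙ₊₁(log a - log δ)` is an antiderivative, `Pₙ₊₁' = Pₙ`. For `δ = 1` the set is the whole
cube and the formula reads `1 = Pₙ(0)`.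
-/

open MeasureTheory Set Real
open scoped Nat

def prodSublevel (n : ℕ) (δ : ℝ) : Set (Fin n → ℝ) :=
  {x | (∀ i, x i ∈ Icc (0 : ℝ) 1) ∧ ∏ i, x i ≤ δ}

section prodSublevel

variable {n : ℕ} {δ : ℝ}

lemma prodSublevel_eq_pi_inter :
    prodSublevel n δ = univ.pi (fun _ => Icc 0 1) ∩ {x | ∏ i, x i ≤ δ} := by
  ext x
  simp only [prodSublevel, mem_inter_iff, mem_pi, mem_univ, forall_const]
  rfl

lemma measurableSet_prodSublevel : MeasurableSet (prodSublevel n δ) := by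
  rw [prodSublevel_eq_pi_inter]
  exact (MeasurableSet.univ_pi fun _ => measurableSet_Icc).inter
    (measurableSet_le (by fun_prop) measurable_const)

lemma prodSublevel_of_one_le (hδ : 1 ≤ δ) :
    prodSublevel n δ = univ.pi fun _ => Icc 0 1 := by
  rw [prodSublevel_eq_pi_inter, inter_eq_left]
  intro x hx
  simp only [mem_pi, mem_univ, forall_const, mem_Icc] at hx
  exact (Finset.prod_le_one (fun i _ => (hx i).1) fun i _ => (hx i).2).trans hδ

lemma volume_prodSublevel_of_one_le (hδ : 1 ≤ δ) : volume (prodSublevel n δ) = 1 := by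
  rw [prodSublevel_of_one_le hδ, volume_pi_pi]
  simp

lemma prodSublevel_zero_of_lt_one (hδ : δ < 1) : prodSublevel 0 δ = ∅ := by
  simpa [prodSublevel, eq_empty_iff_forall_notMem] using hδ

lemma cons_mem_prodSublevel_succ_iff {a : ℝ} (ha : a ∈ Ioc 0 1) (y : Fin n → ℝ) :
    Fin.cons a y ∈ prodSublevel (n + 1) δ ↔ y ∈ prodSublevel n (δ / a) := by
  simp [prodSublevel, Fin.forall_fin_succ, Fin.prod_univ_succ, le_div_iff₀ ha.1, mul_comm,
    ha.1.le, ha.2]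

lemma cons_notMem_prodSublevel_succ {a : ℝ} (ha : a ∉ Icc 0 1) (y : Fin n → ℝ) :
    Fin.cons a y ∉ prodSublevel (n + 1) δ :=
  fun h => ha (by simpa using h.1 0)

variable (n δ) in
lemma volume_prodSublevel_succ :
    volume (prodSublevel (n + 1) δ) = ∫⁻ a in Ioc 0 1, volume (prodSublevel n (δ / a)) := by
  let e := (MeasurableEquiv.piFinSuccAbove (fun _ : Fin (n + 1) => ℝ) 0).symm
  have he : MeasurePreserving e (volume.prod volume) volume :=
    (volume_preserving_piFinSuccAbove (fun _ : Fin (n + 1) => ℝ) 0).symm _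
  have hslice (a : ℝ) : Prod.mk a ⁻¹' (e ⁻¹' prodSublevel (n + 1) δ) =
      {y | Fin.cons a y ∈ prodSublevel (n + 1) δ} := by
    ext y
    simp [e, Fin.consEquiv]
  rw [← he.measure_preimage measurableSet_prodSublevel.nullMeasurableSet,
    Measure.prod_apply (measurableSet_prodSublevel.preimage e.measurable),
    ← setLIntegral_eq_of_support_subset (s := Icc 0 1), setLIntegral_congr Ioc_ae_eq_Icc.symm]
  · refine setLIntegral_congr_fun measurableSet_Ioc fun a ha => ?_
    simp only [hslice, cons_mem_prodSublevel_succ_iff ha, ofPred_mem_eq]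
  · intro a ha
    by_contra hmem
    simp [hslice, cons_notMem_prodSublevel_succ hmem] at ha

end prodSublevel

noncomputable def expPartialSum (n : ℕ) (t : ℝ) : ℝ := ∑ i ∈ Finset.range n, t ^ i / i !

namespace expPartialSum

lemma zero_left (t : ℝ) : expPartialSum 0 t = 0 := Finset.sum_range_zero _

lemma succ_left (n : ℕ) (t : ℝ) : expPartialSum (n + 1) t = expPartialSum n t + t ^ n / n ! :=
  Finset.sum_range_succ _ _

lemma succ_zero (n : ℕ) : expPartialSum (n + 1) 0 = 1 := by
  simp [expPartialSum, Finset.sum_range_succ']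

lemma nonneg (n : ℕ) {t : ℝ} (ht : 0 ≤ t) : 0 ≤ expPartialSum n t :=
  Finset.sum_nonneg fun i _ => by positivity

lemma one_le_succ (n : ℕ) {t : ℝ} (ht : 0 ≤ t) : 1 ≤ expPartialSum (n + 1) t := by
  rw [expPartialSum, Finset.sum_range_succ']
  simpa using Finset.sum_nonneg fun i _ => by positivity

lemma continuous (n : ℕ) : Continuous (expPartialSum n) := by
  unfold expPartialSum; fun_prop

lemma hasDerivAt_succ (n : ℕ) (t : ℝ) :
    HasDerivAt (expPartialSum (n + 1)) (expPartialSum n t) t := by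
  induction n with
  | zero =>
    have hone : expPartialSum 1 = fun _ => 1 := funext fun t => by simp [expPartialSum]
    rw [hone, zero_left]
    exact hasDerivAt_const t (1 : ℝ)
  | succ n ih =>
    have hterm : HasDerivAt (fun t : ℝ => t ^ (n + 1) / (n + 1)!) (t ^ n / n !) t := by
      refine ((hasDerivAt_pow (n + 1) t).div_const ((n + 1)! : ℝ)).congr_deriv ?_
      rw [Nat.factorial_succ]; push_cast; field_simp
    simp only [funext (succ_left (n + 1)), succ_left n t]
    exact ih.add hterm

end expPartialSum

lemma continuousOn_div_mul_expPartialSum (n : ℕ) (c b : ℝ) :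
    ContinuousOn (fun a => c / a * expPartialSum n (log a - b)) (Ioi 0) :=
  (continuousOn_const.div continuousOn_id fun _ ha => ne_of_gt ha).mul
    ((expPartialSum.continuous n).comp_continuousOn
      ((continuousOn_log.mono fun _ ha => ne_of_gt ha).sub continuousOn_const))

lemma integral_div_mul_expPartialSum (n : ℕ) {δ : ℝ} (hδ : 0 < δ) (hδ1 : δ ≤ 1) :
    ∫ a in δ..1, δ / a * expPartialSum n (log a - log δ) =
      δ * expPartialSum (n + 1) (-log δ) - δ := by
  have hpos : ∀ a ∈ uIcc δ 1, 0 < a := fun a ha => hδ.trans_le (by simpa [hδ1] using ha.1)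
  have hderiv : ∀ a ∈ uIcc δ 1, HasDerivAt (fun a => δ * expPartialSum (n + 1) (log a - log δ))
      (δ / a * expPartialSum n (log a - log δ)) a := fun a ha => by
    refine (((expPartialSum.hasDerivAt_succ n _).comp a
      ((hasDerivAt_log (hpos a ha).ne').sub_const (log δ))).const_mul δ).congr_deriv ?_
    field_simp
  have hcont : ContinuousOn (fun a => δ / a * expPartialSum n (log a - log δ)) (uIcc δ 1) :=
    (continuousOn_div_mul_expPartialSum n δ (log δ)).mono hpos
  rw [intervalIntegral.integral_eq_sub_of_hasDerivAt hderiv hcont.intervalIntegrable]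
  simp [expPartialSum.succ_zero]

lemma lintegral_ofReal_div_mul_expPartialSum (n : ℕ) {δ : ℝ} (hδ : 0 < δ) (hδ1 : δ ≤ 1) :
    ∫⁻ a in Ioc δ 1, ENNReal.ofReal (δ / a * expPartialSum n (log a - log δ)) =
      ENNReal.ofReal (δ * expPartialSum (n + 1) (-log δ) - δ) := by
  rw [← integral_div_mul_expPartialSum n hδ hδ1, intervalIntegral.integral_of_le hδ1,
    ofReal_integral_eq_lintegral_ofReal]
  · exact ((continuousOn_div_mul_expPartialSum n δ (log δ)).mono
      fun a ha => hδ.trans_le ha.1).integrableOn_Icc.mono_set Ioc_subset_Icc_self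
  · refine ae_restrict_of_forall_mem measurableSet_Ioc fun a ha => ?_
    have ha0 : 0 < a := hδ.trans ha.1
    exact mul_nonneg (div_nonneg hδ.le ha0.le)
      (expPartialSum.nonneg n (sub_nonneg.2 (log_le_log hδ ha.1.le)))

theorem volume_prodSublevel_of_lt_one (n : ℕ) {δ : ℝ} (hδ0 : 0 < δ) (hδ1 : δ < 1) :
    volume (prodSublevel n δ) = ENNReal.ofReal (δ * expPartialSum n (-log δ)) := by
  induction n generalizing δ with
  | zero => simp [prodSublevel_zero_of_lt_one hδ1, expPartialSum.zero_left]
  | succ n ih =>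
    have hsmall : ∀ a ∈ Ioc 0 δ, volume (prodSublevel n (δ / a)) = 1 := fun a ha =>
      volume_prodSublevel_of_one_le ((one_le_div ha.1).2 ha.2)
    have hlarge : ∀ a ∈ Ioc δ 1, volume (prodSublevel n (δ / a)) =
        ENNReal.ofReal (δ / a * expPartialSum n (log a - log δ)) := fun a ha => by
      have ha0 := hδ0.trans ha.1
      rw [ih (div_pos hδ0 ha0) ((div_lt_one ha0).2 ha.1), log_div hδ0.ne' ha0.ne', neg_sub]
    have hsum := expPartialSum.one_le_succ n (neg_nonneg.2 (log_nonpos hδ0.le hδ1.le))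
    rw [volume_prodSublevel_succ, ← Ioc_union_Ioc_eq_Ioc hδ0.le hδ1.le,
      lintegral_union measurableSet_Ioc (Ioc_disjoint_Ioc_of_le le_rfl),
      setLIntegral_congr_fun measurableSet_Ioc hsmall,
      setLIntegral_congr_fun measurableSet_Ioc hlarge,
      lintegral_ofReal_div_mul_expPartialSum n hδ0 hδ1.le, setLIntegral_const, one_mul,
      Real.volume_Ioc, sub_zero, ← ENNReal.ofReal_add hδ0.le (by nlinarith), add_sub_cancel]

/-- The Lebesgue measure of
`S_N(δ) = {x ∈ [0,1]^N : x₁ ⋯ x_N ≤ δ}` equals `δ · ∑_{i=0}^{N-1} (log(1/δ))^i / i!`. -/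
theorem statement4 (N : ℕ) (hN : 1 ≤ N) (δ : ℝ) (hδ : δ ∈ Set.Ioc (0 : ℝ) 1) :
    volume {x : Fin N → ℝ | (∀ i, x i ∈ Set.Icc (0 : ℝ) 1) ∧ ∏ i, x i ≤ δ} =
      ENNReal.ofReal (δ * ∑ i ∈ Finset.range N, (Real.log (1 / δ)) ^ i / (Nat.factorial i)) := by
  change volume (prodSublevel N δ) = ENNReal.ofReal (δ * expPartialSum N (log (1 / δ)))
  rw [one_div, log_inv]
  rcases hδ.2.lt_or_eq with hδ1 | rfl
  · exact volume_prodSublevel_of_lt_one N hδ.1 hδ1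
  · obtain ⟨n, rfl⟩ := Nat.exists_eq_add_of_le' hN
    rw [volume_prodSublevel_of_one_le le_rfl, log_one, neg_zero, expPartialSum.succ_zero, mul_one,
      ENNReal.ofReal_one]
end

section
/- For every integer N ≥ 1 there exists a constant C_N > 0 such that for all δ ∈ (0, 1/2], the Lebesgue measure of the set {(x₁, …, x_N) ∈ [0,1]^N : ∏_{i=1}^N |cos(2πx_i)| ≤ δ} is at most C_N · δ · (1 + log(1/δ))^{N−1}. -/
open MeasureTheory Set
open scoped Real

/-! On `[0,1]`, `|cos 2πx|` dominates the tent map `q x = 4 · dist(x, {1/4, 3/4})`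
(`cosMinorant`), and `q` preserves Lebesgue measure on `[0,1]`: for `0 ≤ a ≤ 1`, `{q ≤ a}`
is two intervals of length `a/2`. So the set in question has measure at most that of
`{y ∈ [0,1]^N : ∏ yᵢ ≤ δ}`. Slice the latter along the first coordinate `t`: by induction
on `N`, the slice has measure at most `1`, and at most `(δ/t) (1 + log (t/δ))^(N-2)` when
`t > δ`; integrating these bounds over `[0, δ]` and `[δ, 1]` gives
`δ (1 + log (1/δ))^(N-1)`. -/

local notation "𝕀" => volume.restrict (Icc (0 : ℝ) 1)

instance : IsProbabilityMeasure 𝕀 :=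
  ⟨by rw [Measure.restrict_apply_univ, Real.volume_Icc, sub_zero, ENNReal.ofReal_one]⟩

lemma volume_restrict_Icc_Iic (a : ℝ) : 𝕀 (Iic a) = ENNReal.ofReal (min a 1) := by
  rw [Measure.restrict_apply measurableSet_Iic, inter_comm, ← Ici_inter_Iic, inter_assoc,
    Iic_inter_Iic, Ici_inter_Iic, Real.volume_Icc, sub_zero, inf_comm]

lemma four_mul_abs_le_abs_sin_two_pi_mul {y : ℝ} (hy : |y| ≤ 1 / 4) :
    4 * |y| ≤ |Real.sin (2 * π * y)| := by
  have h2π : |2 * π| = 2 * π := abs_of_pos Real.two_pi_pos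
  calc 4 * |y| = 2 / π * |2 * π * y| := by
        rw [abs_mul, h2π]; field_simp; ring
    _ ≤ |Real.sin (2 * π * y)| := by
        refine Real.mul_abs_le_abs_sin ?_
        rw [abs_mul, h2π]
        nlinarith [Real.pi_pos]

noncomputable def cosMinorant (t : ℝ) : ℝ := 4 * min |t - 1 / 4| |t - 3 / 4|

lemma cosMinorant_nonneg (t : ℝ) : 0 ≤ cosMinorant t := by unfold cosMinorant; positivity

lemma continuous_cosMinorant : Continuous cosMinorant := by unfold cosMinorant; fun_prop

lemma cosMinorant_le_abs_cos {x : ℝ} (hx : x ∈ Icc (0 : ℝ) 1) :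
    cosMinorant x ≤ |Real.cos (2 * π * x)| := by
  obtain ⟨hx0, hx1⟩ := hx
  rcases le_or_gt x (1 / 2) with hx | hx
  · calc cosMinorant x ≤ 4 * |x - 1 / 4| := by
          unfold cosMinorant; gcongr; exact min_le_left _ _
      _ ≤ |Real.sin (2 * π * (x - 1 / 4))| :=
          four_mul_abs_le_abs_sin_two_pi_mul (abs_le.2 ⟨by linarith, by linarith⟩)
      _ = |Real.cos (2 * π * x)| := by
          rw [show 2 * π * (x - 1 / 4) = 2 * π * x - π / 2 by ring, Real.sin_sub_pi_div_two,
            abs_neg]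
  · calc cosMinorant x ≤ 4 * |x - 3 / 4| := by
          unfold cosMinorant; gcongr; exact min_le_right _ _
      _ ≤ |Real.sin (2 * π * (x - 3 / 4))| :=
          four_mul_abs_le_abs_sin_two_pi_mul (abs_le.2 ⟨by linarith, by linarith⟩)
      _ = |Real.cos (2 * π * x)| := by
          rw [show 2 * π * (x - 3 / 4) = 2 * π * x - π / 2 - π by ring, Real.sin_sub_pi,
            Real.sin_sub_pi_div_two, neg_neg]

lemma cosMinorant_le_one {x : ℝ} (hx : x ∈ Icc (0 : ℝ) 1) : cosMinorant x ≤ 1 :=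
  (cosMinorant_le_abs_cos hx).trans (Real.abs_cos_le_one _)

lemma cosMinorant_preimage_Iic (a : ℝ) :
    cosMinorant ⁻¹' Iic a =
      Icc (1 / 4 - a / 4) (1 / 4 + a / 4) ∪ Icc (3 / 4 - a / 4) (3 / 4 + a / 4) := by
  ext t
  simp only [mem_preimage, mem_Iic, mem_union, mem_Icc, cosMinorant]
  rw [← le_div_iff₀' four_pos, min_le_iff, abs_le, abs_le]
  constructor <;> rintro (⟨h1, h2⟩ | ⟨h1, h2⟩) <;> [left; right; left; right] <;>
    constructor <;> linarith

lemma measurePreserving_cosMinorant : MeasurePreserving cosMinorant 𝕀 𝕀 := by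
  have hq := continuous_cosMinorant.measurable
  refine ⟨hq, Measure.ext_of_Iic _ _ fun a => ?_⟩
  rw [Measure.map_apply hq measurableSet_Iic, volume_restrict_Icc_Iic,
    Measure.restrict_apply (hq measurableSet_Iic)]
  rcases lt_or_ge a 0 with ha0 | ha0
  · have : cosMinorant ⁻¹' Iic a = ∅ :=
      eq_empty_of_forall_notMem fun t ht => (ha0.trans_le' ht).not_ge (cosMinorant_nonneg t)
    rw [this, empty_inter, measure_empty, ENNReal.ofReal_of_nonpos (min_le_of_left_le ha0.le)]
  rcases lt_or_ge a 1 with ha1 | ha1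
  · have hsub : cosMinorant ⁻¹' Iic a ⊆ Icc 0 1 := by
      rw [cosMinorant_preimage_Iic]
      rintro t (⟨h1, h2⟩ | ⟨h1, h2⟩) <;> constructor <;> linarith
    rw [inter_eq_left.2 hsub, cosMinorant_preimage_Iic, measure_union _ measurableSet_Icc,
      Real.volume_Icc, Real.volume_Icc, ← ENNReal.ofReal_add (by linarith) (by linarith),
      min_eq_left ha1.le]
    · ring_nf
    · exact disjoint_left.2 fun t h1 h2 => by linarith [h1.2, h2.1]
  · have hsup : Icc 0 1 ⊆ cosMinorant ⁻¹' Iic a :=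
      fun t ht => (cosMinorant_le_one ht).trans ha1
    rw [inter_eq_right.2 hsup, Real.volume_Icc, min_eq_right ha1, sub_zero]

lemma intervalIntegrable_one_add_log_div_pow_div {a b : ℝ} (ha : 0 < a) (hab : a ≤ b)
    (n : ℕ) :
    IntervalIntegrable (fun t => (1 + Real.log (t / a)) ^ n / t) volume a b := by
  have hpos : ∀ t ∈ uIcc a b, 0 < t := fun t ht => ha.trans_le (uIcc_of_le hab ▸ ht).1
  refine (ContinuousOn.div ?_ continuousOn_id fun t ht => (hpos t ht).ne').intervalIntegrable
  exact (continuousOn_const.add ((continuousOn_id.div_const a).log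
    fun t ht => (div_pos (hpos t ht) ha).ne')).pow n

lemma integral_one_add_log_div_pow_div {a b : ℝ} (ha : 0 < a) (hab : a ≤ b) (n : ℕ) :
    ∫ t in a..b, (1 + Real.log (t / a)) ^ n / t =
      ((1 + Real.log (b / a)) ^ (n + 1) - 1) / (n + 1) := by
  have hpos : ∀ t ∈ uIcc a b, 0 < t := fun t ht => ha.trans_le (uIcc_of_le hab ▸ ht).1
  have hderiv : ∀ t ∈ uIcc a b, HasDerivAt (fun t => (1 + Real.log (t / a)) ^ (n + 1) / (n + 1))
      ((1 + Real.log (t / a)) ^ n / t) t := by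
    intro t ht
    have hlog := (((hasDerivAt_id' t).div_const a).log (div_pos (hpos t ht) ha).ne').const_add 1
    refine ((hlog.fun_pow (n + 1)).div_const ((n : ℝ) + 1)).congr_deriv ?_
    field_simp [(hpos t ht).ne', ha.ne']
    push_cast
    ring
  rw [intervalIntegral.integral_eq_sub_of_hasDerivAt hderiv
      (intervalIntegrable_one_add_log_div_pow_div ha hab n),
    div_self ha.ne', Real.log_one, add_zero, one_pow, sub_div]

lemma setLIntegral_Ioc_one_add_log_div_pow_div {a b : ℝ} (ha : 0 < a) (hab : a ≤ b) (n : ℕ) :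
    ∫⁻ t in Ioc a b, ENNReal.ofReal ((1 + Real.log (t / a)) ^ n / t) =
      ENNReal.ofReal (((1 + Real.log (b / a)) ^ (n + 1) - 1) / (n + 1)) := by
  have hnonneg : 0 ≤ᵐ[volume.restrict (Ioc a b)] fun t => (1 + Real.log (t / a)) ^ n / t := by
    filter_upwards [ae_restrict_mem measurableSet_Ioc] with t ht
    have := Real.log_nonneg ((one_le_div ha).2 ht.1.le)
    have := ha.trans ht.1
    positivity
  rw [← ofReal_integral_eq_lintegral_ofReal
      (intervalIntegrable_one_add_log_div_pow_div ha hab n).1 hnonneg,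
    ← intervalIntegral.integral_of_le hab, integral_one_add_log_div_pow_div ha hab n]

lemma pi_setOf_prod_le_eq_lintegral (μ : Measure ℝ) [SigmaFinite μ] (n : ℕ) (δ : ℝ) :
    Measure.pi (fun _ : Fin (n + 2) => μ) {y | ∏ i, y i ≤ δ} =
      ∫⁻ t, Measure.pi (fun _ : Fin (n + 1) => μ) {z | t * ∏ i, z i ≤ δ} ∂μ := by
  set T : Set (ℝ × (Fin (n + 1) → ℝ)) := {p | p.1 * ∏ i, p.2 i ≤ δ}
  have hT : MeasurableSet T := measurableSet_le (by fun_prop) measurable_const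
  have hsplit : {y : Fin (n + 2) → ℝ | ∏ i, y i ≤ δ} =
      MeasurableEquiv.piFinSuccAbove (fun _ => ℝ) 0 ⁻¹' T := by
    ext y
    simp only [mem_ofPred_eq, mem_preimage, MeasurableEquiv.piFinSuccAbove_apply, T,
      Fin.prod_univ_succAbove _ 0]
    rfl
  rw [hsplit, (measurePreserving_piFinSuccAbove (fun _ => μ) 0).measure_preimage
    hT.nullMeasurableSet, Measure.prod_apply hT]
  rfl

lemma pi_setOf_prod_le_le (n : ℕ) {δ : ℝ} (hδ0 : 0 < δ) (hδ1 : δ ≤ 1) :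
    Measure.pi (fun _ : Fin (n + 1) => 𝕀) {y | ∏ i, y i ≤ δ} ≤
      ENNReal.ofReal (δ * (1 + Real.log (1 / δ)) ^ n) := by
  induction n generalizing δ with
  | zero =>
    have hset : {y : Fin 1 → ℝ | ∏ i, y i ≤ δ} =
        MeasurableEquiv.funUnique (Fin 1) ℝ ⁻¹' Iic δ := by
      ext y; simp
    have := (measurePreserving_funUnique 𝕀 (Fin 1)).measure_preimage
      measurableSet_Iic.nullMeasurableSet (s := Iic δ)
    rw [hset]
    refine (this.trans ?_).le
    rw [volume_restrict_Icc_Iic, min_eq_left hδ1, pow_zero, mul_one]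
  | succ n ih =>
    set ν := Measure.pi fun _ : Fin (n + 1) => 𝕀
    have hslice : ∀ t ∈ Ioc δ 1, ν {z | t * ∏ i, z i ≤ δ} ≤
        ENNReal.ofReal δ * ENNReal.ofReal ((1 + Real.log (t / δ)) ^ n / t) := by
      rintro t ⟨hδt, -⟩
      have ht0 : 0 < t := hδ0.trans hδt
      simp_rw [← le_div_iff₀' ht0]
      rw [← ENNReal.ofReal_mul hδ0.le, ← mul_comm_div, ← one_div_div δ t]
      exact ih (div_pos hδ0 ht0) ((div_le_one ht0).2 hδt.le)
    set L := Real.log (1 / δ)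
    have hX : 1 ≤ (1 + L) ^ (n + 1) :=
      one_le_pow₀ (le_add_of_nonneg_right (Real.log_nonneg (one_le_one_div hδ0 hδ1)))
    have hquot : 0 ≤ ((1 + L) ^ (n + 1) - 1) / (n + 1) := by
      have := sub_nonneg.2 hX; positivity
    have hquot_le : ((1 + L) ^ (n + 1) - 1) / (n + 1) ≤ (1 + L) ^ (n + 1) - 1 :=
      div_le_self (sub_nonneg.2 hX) (by linarith [n.cast_nonneg (α := ℝ)])
    rw [pi_setOf_prod_le_eq_lintegral]
    calc ∫⁻ t in Icc 0 1, ν {z | t * ∏ i, z i ≤ δ}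
        ≤ (∫⁻ t in Icc 0 δ, ν {z | t * ∏ i, z i ≤ δ}) +
          ∫⁻ t in Ioc δ 1, ν {z | t * ∏ i, z i ≤ δ} :=
          (lintegral_mono_set (Icc_union_Ioc_eq_Icc hδ0.le hδ1).ge).trans
            (lintegral_union_le _ _ _)
      _ ≤ (∫⁻ _ in Icc 0 δ, 1) + ∫⁻ t in Ioc δ 1,
            ENNReal.ofReal δ * ENNReal.ofReal ((1 + Real.log (t / δ)) ^ n / t) :=
          add_le_add (lintegral_mono fun _ => prob_le_one)
            (setLIntegral_mono' measurableSet_Ioc hslice)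
      _ = ENNReal.ofReal (δ + δ * (((1 + L) ^ (n + 1) - 1) / (n + 1))) := by
          rw [lintegral_const_mul' _ _ ENNReal.ofReal_ne_top,
            setLIntegral_Ioc_one_add_log_div_pow_div hδ0 hδ1, setLIntegral_const, one_mul,
            Real.volume_Icc, sub_zero, ← ENNReal.ofReal_mul hδ0.le,
            ← ENNReal.ofReal_add hδ0.le (by positivity)]
      _ ≤ ENNReal.ofReal (δ * (1 + L) ^ (n + 1)) := ENNReal.ofReal_le_ofReal (by nlinarith)

/-- For every `N ≥ 1` there is `C_N > 0` such that for all `δ ∈ (0, 1/2]`,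
the Lebesgue measure of `{x ∈ [0,1]^N : ∏ |cos(2πxᵢ)| ≤ δ}` is at most
`C_N · δ · (1 + log(1/δ))^(N-1)`. -/
theorem statement6 (N : ℕ) (hN : 1 ≤ N) :
    ∃ C : ℝ, 0 < C ∧ ∀ δ : ℝ, δ ∈ Set.Ioc (0 : ℝ) (1 / 2) →
      volume {x : Fin N → ℝ |
          (∀ i, x i ∈ Set.Icc (0 : ℝ) 1) ∧ ∏ i, |Real.cos (2 * π * x i)| ≤ δ} ≤
        ENNReal.ofReal (C * δ * (1 + Real.log (1 / δ)) ^ (N - 1)) := by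
  obtain ⟨n, rfl⟩ : ∃ n, N = n + 1 := ⟨N - 1, by omega⟩
  refine ⟨1, one_pos, fun δ ⟨hδ0, hδ⟩ => ?_⟩
  set A := {y : Fin (n + 1) → ℝ | ∏ i, y i ≤ δ}
  have hA : MeasurableSet A := measurableSet_le (by fun_prop) measurable_const
  set Q : (Fin (n + 1) → ℝ) → Fin (n + 1) → ℝ := fun x i => cosMinorant (x i)
  have hQ : MeasurePreserving Q (Measure.pi fun _ => 𝕀) (Measure.pi fun _ => 𝕀) :=
    measurePreserving_pi _ _ fun _ => measurePreserving_cosMinorant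
  calc volume {x : Fin (n + 1) → ℝ |
          (∀ i, x i ∈ Icc (0 : ℝ) 1) ∧ ∏ i, |Real.cos (2 * π * x i)| ≤ δ}
      ≤ volume (Q ⁻¹' A ∩ univ.pi fun _ => Icc 0 1) := by
        refine measure_mono fun x ⟨hx, hprod⟩ => ⟨?_, fun i _ => hx i⟩
        exact (Finset.prod_le_prod (fun i _ => cosMinorant_nonneg _)
          fun i _ => cosMinorant_le_abs_cos (hx i)).trans hprod
    _ = Measure.pi (fun _ => 𝕀) A := by
        rw [← Measure.restrict_apply (hQ.measurable hA), volume_pi, Measure.restrict_pi_pi,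
          hQ.measure_preimage hA.nullMeasurableSet]
    _ ≤ ENNReal.ofReal (1 * δ * (1 + Real.log (1 / δ)) ^ (n + 1 - 1)) := by
        simpa using pi_setOf_prod_le_le n hδ0 (by linarith)
end

section
/- Let N ≥ 2 be an integer and let (μ_{ij})_{i≠j} be fixed real numbers. Define f_L : ℝ^N → ℝ^N by f_L(x)_i = 2x_i + L·sin(2πx_i) + Σ_{j≠i} μ_{ij}·sin(2π(x_j − x_i)). Then there exist constants C > 0 and L₀ > 0 (depending only on N and max_{ij}|μ_{ij}|) such that for all L ≥ L₀ and all x ∈ ℝ^N: |det(L^{-1}·Df_L(x)) − (2π)^N · ∏_{i=1}^N cos(2πx_i)| ≤ C/L. -/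
open scoped Real
open Real Finset

/-!
Writing `D(x) = diag(2π cos 2πxᵢ)`, the Jacobian of the coupled standard map is
`Df_L(x) = L • D(x) + E(x)`, where the entries of `E(x)` (from the linear part `2xᵢ` and the
couplings) are bounded independently of `L` and `x`. So `L⁻¹ • Df_L(x) = D(x) + L⁻¹ • E(x)`, and
in the Leibniz expansion each of the `N!` products changes by `O(L⁻¹)` under this perturbation,
as every product of entries is Lipschitz in each factor.
-/

theorem norm_prod_sub_prod_le {ι R : Type*} [DecidableEq ι] [NormedCommRing R] [NormOneClass R]
    (s : Finset ι) {a b : ι → R} {M ε : ℝ} (ha : ∀ i ∈ s, ‖a i‖ ≤ M) (hb : ∀ i ∈ s, ‖b i‖ ≤ M)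
    (hab : ∀ i ∈ s, ‖a i - b i‖ ≤ ε) :
    ‖∏ i ∈ s, a i - ∏ i ∈ s, b i‖ ≤ #s * M ^ (#s - 1) * ε := by
  induction s using Finset.induction_on with
  | empty => simp
  | @insert i s hi ih =>
    simp only [Finset.forall_mem_insert] at ha hb hab
    have hM : 0 ≤ M := (norm_nonneg _).trans ha.1
    have hε : 0 ≤ ε := (norm_nonneg _).trans hab.1
    have hprod : ‖∏ k ∈ s, b k‖ ≤ M ^ #s :=
      (Finset.norm_prod_le _ _).trans
        ((Finset.prod_le_prod (fun _ _ => norm_nonneg _) hb.2).trans_eq (Finset.prod_const M))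
    have hpow : (#s : ℝ) * (M * M ^ (#s - 1)) = #s * M ^ #s := by
      rcases Nat.eq_zero_or_pos #s with h | h
      · simp [h]
      · rw [mul_pow_sub_one h.ne']
    rw [Finset.prod_insert hi, Finset.prod_insert hi, Finset.card_insert_of_notMem hi,
      Nat.add_sub_cancel, Nat.cast_succ]
    calc ‖a i * ∏ k ∈ s, a k - b i * ∏ k ∈ s, b k‖
        = ‖a i * (∏ k ∈ s, a k - ∏ k ∈ s, b k) + (a i - b i) * ∏ k ∈ s, b k‖ := by ring_nf
      _ ≤ M * (#s * M ^ (#s - 1) * ε) + ε * M ^ #s := by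
        refine (norm_add_le _ _).trans (add_le_add ?_ ?_) <;> refine (norm_mul_le _ _).trans ?_
        · exact mul_le_mul ha.1 (ih ha.2 hb.2 hab.2) (norm_nonneg _) hM
        · exact mul_le_mul hab.1 hprod (norm_nonneg _) hε
      _ = (#s + 1) * M ^ #s * ε := by linear_combination ε * hpow

theorem norm_det_sub_det_le {n R : Type*} [Fintype n] [DecidableEq n] [NormedCommRing R]
    [NormOneClass R] {A B : Matrix n n R} {M ε : ℝ} (hA : ∀ i j, ‖A i j‖ ≤ M)
    (hB : ∀ i j, ‖B i j‖ ≤ M) (hAB : ∀ i j, ‖A i j - B i j‖ ≤ ε) :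
    ‖A.det - B.det‖ ≤
      (Fintype.card n).factorial * (Fintype.card n * M ^ (Fintype.card n - 1) * ε) := by
  rw [Matrix.det_apply', Matrix.det_apply', ← Finset.sum_sub_distrib]
  refine (norm_sum_le _ _).trans ?_
  calc ∑ σ : Equiv.Perm n,
        ‖(Equiv.Perm.sign σ : R) * ∏ i, A (σ i) i - (Equiv.Perm.sign σ : R) * ∏ i, B (σ i) i‖
      ≤ ∑ _σ : Equiv.Perm n, (Fintype.card n * M ^ (Fintype.card n - 1) * ε) := by
        refine Finset.sum_le_sum fun σ _ => ?_
        rw [← mul_sub]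
        refine (norm_mul_le _ _).trans ?_
        have hsign : ‖((Equiv.Perm.sign σ : ℤ) : R)‖ = 1 := by
          rcases Int.units_eq_one_or (Equiv.Perm.sign σ) with h | h <;> simp [h]
        rw [hsign, one_mul]
        exact norm_prod_sub_prod_le _ (fun i _ => hA _ _) (fun i _ => hB _ _) (fun i _ => hAB _ _)
    _ = _ := by
        rw [Finset.sum_const, Finset.card_univ, Fintype.card_perm, nsmul_eq_mul]

theorem norm_det_add_smul_sub_det_le {n 𝕜 : Type*} [Fintype n] [DecidableEq n] [NormedField 𝕜]
    {A E : Matrix n n 𝕜} {a b : ℝ} {t : 𝕜} (hA : ∀ i j, ‖A i j‖ ≤ a) (hE : ∀ i j, ‖E i j‖ ≤ b)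
    (ht : ‖t‖ ≤ 1) :
    ‖(A + t • E).det - A.det‖ ≤
      (Fintype.card n).factorial * Fintype.card n * (a + b) ^ (Fintype.card n - 1) * b * ‖t‖ := by
  have htE (i j : n) : ‖t * E i j‖ ≤ b :=
    (norm_mul_le _ _).trans ((mul_le_of_le_one_left (norm_nonneg _) ht).trans (hE i j))
  have hdet := norm_det_sub_det_le (A := A + t • E) (B := A) (M := a + b) (ε := ‖t‖ * b)
    (fun i j => (norm_add_le _ _).trans (add_le_add (hA i j) (htE i j)))
    (fun i j => (hA i j).trans (le_add_of_nonneg_right ((norm_nonneg _).trans (hE i j))))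
    (fun i j => by
      simpa only [Matrix.add_apply, Matrix.smul_apply, smul_eq_mul, add_sub_cancel_left,
        norm_mul] using mul_le_mul_of_nonneg_left (hE i j) (norm_nonneg t))
  exact hdet.trans_eq (by ring)

/-- The diagonal couplings `μ i i` may be kept: they multiply `sin 0 = 0`. -/
noncomputable def coupledStandardMap {N : ℕ} (μ : Fin N → Fin N → ℝ) (L : ℝ) (x : Fin N → ℝ)
    (i : Fin N) : ℝ :=
  2 * x i + L * sin (2 * π * x i) + ∑ j, μ i j * sin (2 * π * (x j - x i))

theorem coupledStandardMap_eq {N : ℕ} (μ : Fin N → Fin N → ℝ) (L : ℝ) (x : Fin N → ℝ)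
    (i : Fin N) :
    2 * x i + L * sin (2 * π * x i) +
        ∑ j, (if j = i then 0 else μ i j * sin (2 * π * (x j - x i))) =
      coupledStandardMap μ L x i := by
  refine congrArg _ (sum_congr rfl fun j _ => ?_)
  split_ifs with h
  · simp [h]
  · rfl

noncomputable def leadingJacobian {N : ℕ} (x : Fin N → ℝ) : Matrix (Fin N) (Fin N) ℝ :=
  Matrix.diagonal fun i => 2 * π * cos (2 * π * x i)

noncomputable def couplingJacobian {N : ℕ} (μ : Fin N → Fin N → ℝ) (x : Fin N → ℝ) :
    Matrix (Fin N) (Fin N) ℝ :=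
  Matrix.of fun i j => 2 * (Pi.single j 1 : Fin N → ℝ) i +
    ∑ k, μ i k * (2 * π * cos (2 * π * (x k - x i))) *
      ((Pi.single j 1 : Fin N → ℝ) k - (Pi.single j 1 : Fin N → ℝ) i)

theorem fderiv_coupledStandardMap_apply_single {N : ℕ} (μ : Fin N → Fin N → ℝ) (L : ℝ)
    (x : Fin N → ℝ) (i j : Fin N) :
    fderiv ℝ (fun y => coupledStandardMap μ L y i) x (Pi.single j 1) =
      L * leadingJacobian x i j + couplingJacobian μ x i j := by
  have hproj (k : Fin N) := hasFDerivAt_apply (𝕜 := ℝ) (F' := fun _ => ℝ) k x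
  have h := (((hproj i).const_mul 2).fun_add
    ((((hproj i).const_mul (2 * π)).sin).const_mul L)).fun_add
    (HasFDerivAt.fun_sum (u := univ) fun k _ =>
      ((((hproj k).fun_sub (hproj i)).const_mul (2 * π)).sin).const_mul (μ i k))
  unfold coupledStandardMap
  rw [h.fderiv]
  simp only [add_apply, smul_apply, _root_.sum_apply, sub_apply, ContinuousLinearMap.proj_apply,
    smul_eq_mul, leadingJacobian, Matrix.diagonal_apply, couplingJacobian, Matrix.of_apply]
  split_ifs with hij
  · subst hij
    simp only [Pi.single_eq_same]
    ring_nf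
  · simp only [Pi.single_eq_of_ne hij]
    ring_nf

theorem det_leadingJacobian {N : ℕ} (x : Fin N → ℝ) :
    (leadingJacobian x).det = (2 * π) ^ N * ∏ i, cos (2 * π * x i) := by
  rw [leadingJacobian, Matrix.det_diagonal, prod_mul_distrib, prod_const, card_univ,
    Fintype.card_fin]

theorem abs_leadingJacobian_le {N : ℕ} (x : Fin N → ℝ) (i j : Fin N) :
    |leadingJacobian x i j| ≤ 2 * π := by
  rw [leadingJacobian, Matrix.diagonal_apply]
  split_ifs
  · rw [abs_mul, abs_of_pos (by positivity : 0 < 2 * π)]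
    exact mul_le_of_le_one_right (by positivity) (abs_cos_le_one _)
  · simp [pi_pos.le]

theorem abs_single_sub_single_le {ι : Type*} [DecidableEq ι] (j k i : ι) :
    |(Pi.single j 1 : ι → ℝ) k - (Pi.single j 1 : ι → ℝ) i| ≤ 1 := by
  simp only [Pi.single_apply]
  split_ifs <;> norm_num

theorem abs_couplingJacobian_le {N : ℕ} (μ : Fin N → Fin N → ℝ) (x : Fin N → ℝ) (i j : Fin N) :
    |couplingJacobian μ x i j| ≤ 2 + 2 * π * ∑ i, ∑ k, |μ i k| := by
  have hdiag : |2 * (Pi.single j 1 : Fin N → ℝ) i| ≤ 2 := by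
    simp only [Pi.single_apply]
    split_ifs <;> norm_num
  have hterm (k : Fin N) : |μ i k * (2 * π * cos (2 * π * (x k - x i))) *
      ((Pi.single j 1 : Fin N → ℝ) k - (Pi.single j 1 : Fin N → ℝ) i)| ≤ 2 * π * |μ i k| := by
    rw [abs_mul, abs_mul, abs_mul, abs_of_pos (by positivity : 0 < 2 * π)]
    calc |μ i k| * (2 * π * |cos (2 * π * (x k - x i))|) *
          |(Pi.single j 1 : Fin N → ℝ) k - (Pi.single j 1 : Fin N → ℝ) i|
        ≤ |μ i k| * (2 * π * 1) * 1 := by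
          gcongr
          exacts [abs_cos_le_one _, abs_single_sub_single_le j k i]
      _ = 2 * π * |μ i k| := by ring
  have hrow : ∑ k, |μ i k| ≤ ∑ i, ∑ k, |μ i k| :=
    single_le_sum (f := fun i => ∑ k, |μ i k|) (fun _ _ => sum_nonneg fun _ _ => abs_nonneg _)
      (mem_univ i)
  calc |couplingJacobian μ x i j|
      ≤ 2 + ∑ k, 2 * π * |μ i k| :=
        (abs_add_le _ _).trans (add_le_add hdiag
          ((abs_sum_le_sum_abs _ _).trans (sum_le_sum fun k _ => hterm k)))
    _ ≤ 2 + 2 * π * ∑ i, ∑ k, |μ i k| := by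
        rw [← mul_sum]
        gcongr

/-- For the coupled standard map family
`f_L(x)_i = 2xᵢ + L sin(2πxᵢ) + ∑_{j≠i} μᵢⱼ sin(2π(xⱼ - xᵢ))`, with Jacobian matrix
`J L x` (entries `∂f_L^i/∂x_j`), there are `C > 0` and `L₀ > 0` such that for all `L ≥ L₀`
and all `x`, `|det(L⁻¹ · Df_L(x)) - (2π)^N ∏ cos(2πxᵢ)| ≤ C/L`. -/
theorem statement7 (N : ℕ) (hN : 2 ≤ N) (μ : Fin N → Fin N → ℝ)
    (f : ℝ → (Fin N → ℝ) → Fin N → ℝ)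
    (hf : ∀ (L : ℝ) (x : Fin N → ℝ) (i : Fin N),
      f L x i = 2 * x i + L * Real.sin (2 * π * x i) +
        ∑ j, if j = i then 0 else μ i j * Real.sin (2 * π * (x j - x i)))
    (J : ℝ → (Fin N → ℝ) → Matrix (Fin N) (Fin N) ℝ)
    (hJ : ∀ (L : ℝ) (x : Fin N → ℝ) (i j : Fin N),
      J L x i j = fderiv ℝ (fun y => f L y i) x (Pi.single j 1)) :
    ∃ C : ℝ, 0 < C ∧ ∃ L₀ : ℝ, 0 < L₀ ∧ ∀ L : ℝ, L₀ ≤ L → ∀ x : Fin N → ℝ,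
      |(L⁻¹ • J L x).det - (2 * π) ^ N * ∏ i, Real.cos (2 * π * x i)| ≤ C / L := by
  have hJ_eq (L : ℝ) (x : Fin N → ℝ) : J L x = L • leadingJacobian x + couplingJacobian μ x := by
    ext i j
    simp only [hJ, hf, coupledStandardMap_eq, fderiv_coupledStandardMap_apply_single,
      Matrix.add_apply, Matrix.smul_apply, smul_eq_mul]
  set K := 2 + 2 * π * ∑ i, ∑ k, |μ i k|
  refine ⟨N.factorial * N * (2 * π + K) ^ (N - 1) * K, by positivity, 1, one_pos, fun L hL x => ?_⟩
  have hL0 : 0 < L := one_pos.trans_le hL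
  have hscale : L⁻¹ • J L x = leadingJacobian x + L⁻¹ • couplingJacobian μ x := by
    rw [hJ_eq, smul_add, smul_smul, inv_mul_cancel₀ hL0.ne', one_smul]
  have hdet := norm_det_add_smul_sub_det_le (abs_leadingJacobian_le x)
    (abs_couplingJacobian_le μ x) (t := L⁻¹)
    (by simpa [abs_of_pos hL0] using inv_le_one_of_one_le₀ hL)
  rw [hscale, ← det_leadingJacobian x]
  simpa [Real.norm_eq_abs, abs_of_pos hL0, div_eq_mul_inv] using hdet
end

section
/- Let N ≥ 1 and let g : ℝ^N → ℝ be a C¹ function that is ℤ^N-periodic (g(x + k) = g(x) for all k ∈ ℤ^N) and has 0 as a regular value, i.e. there is no x with g(x) = 0 and ∇g(x) = 0 simultaneously. Then there exist constants Ĉ > 0 and ε̂ > 0 such that for every 0 < ε ≤ ε̂, the Lebesgue measure of the set {x ∈ [0,1]^N : |g(x)| ≤ ε} is at most Ĉ·ε. -/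
open MeasureTheory Metric Set Filter Topology
open scoped NNReal ENNReal

/-!
Near a zero `x₀` of `g` some partial derivative `∂ᵢ g` does not vanish, so on a small ball it
is bounded below by some `c > 0` (after replacing `g` by `-g`). On every line parallel to `eᵢ`
the function `g` then grows at rate at least `c`, so `{|g| ≤ ε}` meets the line in a set of
length at most `2ε / c`, and Fubini bounds the measure of `{|g| ≤ ε}` in the ball by `O(ε)`.
Finitely many such balls cover the zeros of `g` in the compact cube, and outside them `|g|` is
bounded below by some `δ > 0`, so for `ε < δ` the sublevel set lies in these balls.
-/

lemma exists_apply_single_ne_zero {N : ℕ} {ℓ : (Fin N → ℝ) →L[ℝ] ℝ} (hℓ : ℓ ≠ 0) :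
    ∃ i, ℓ (Pi.single i 1) ≠ 0 := by
  by_contra! h
  exact hℓ (ContinuousLinearMap.coe_injective ((Pi.basisFun ℝ (Fin N)).ext (by simpa using h)))

lemma Fin.insertNth_eq_add_smul_single {n : ℕ} (i : Fin (n + 1)) (y : Fin n → ℝ) (t t' : ℝ) :
    i.insertNth t' y = i.insertNth t y + (t' - t) • Pi.single i (1 : ℝ) := by
  funext j
  induction j using Fin.succAboveCases i <;> simp

lemma Convex.mul_le_sub_of_le_fderiv_apply {E : Type*} [NormedAddCommGroup E]
    [NormedSpace ℝ E] {g : E → ℝ} (hg : Differentiable ℝ g) {B : Set E}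
    (hB : Convex ℝ B) {v : E} {c : ℝ} (hc : ∀ x ∈ B, c ≤ fderiv ℝ g x v) {x : E} {s : ℝ}
    (hx : x ∈ B) (hxs : x + s • v ∈ B) (hs : 0 ≤ s) :
    c * s ≤ g (x + s • v) - g x := by
  have hline : ∀ τ : ℝ, HasDerivAt (fun τ => g (x + τ • v)) (fderiv ℝ g (x + τ • v) v) τ :=
    fun τ => (hg _).hasFDerivAt.comp_hasDerivAt τ
      (((hasDerivAt_id τ).smul_const v).const_add x |>.congr_deriv (one_smul ℝ v))
  have hD : Convex ℝ ((fun τ : ℝ => x + τ • v) ⁻¹' B) :=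
    (hB.translate_preimage_right x).is_linear_preimage (f := fun τ : ℝ => τ • v)
      (IsLinearMap.isLinearMap_smul' v)
  simpa using hD.mul_sub_le_image_sub_of_le_deriv
    (fun τ _ => (hline τ).continuousAt.continuousWithinAt)
    (fun τ _ => (hline τ).differentiableAt.differentiableWithinAt)
    (fun τ hτ => (hline τ).deriv ▸ hc _ (interior_subset (s := (fun τ : ℝ => x + τ • v) ⁻¹' B) hτ))
    0 (by simpa using hx) s hxs hs

section Slices

variable {n : ℕ} {g : (Fin (n + 1) → ℝ) → ℝ} {i : Fin (n + 1)} {c : ℝ}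

lemma Convex.dist_le_of_abs_le_of_le_fderiv_apply_single (hg : Differentiable ℝ g)
    {B : Set (Fin (n + 1) → ℝ)} (hB : Convex ℝ B) (hc0 : 0 < c)
    (hc : ∀ x ∈ B, c ≤ fderiv ℝ g x (Pi.single i 1)) {ε : ℝ} {y : Fin n → ℝ} {t t' : ℝ}
    (ht : i.insertNth t y ∈ B ∩ {x | |g x| ≤ ε}) (ht' : i.insertNth t' y ∈ B ∩ {x | |g x| ≤ ε}) :
    dist t t' ≤ 2 * ε / c := by
  wlog htt : t ≤ t' generalizing t t'
  · exact dist_comm t t' ▸ this ht' ht (le_of_not_ge htt)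
  obtain ⟨htB, htε : |g (i.insertNth t y)| ≤ ε⟩ := ht
  obtain ⟨ht'B, ht'ε : |g (i.insertNth t' y)| ≤ ε⟩ := ht'
  have hline := Fin.insertNth_eq_add_smul_single i y t t'
  have hgrowth := hB.mul_le_sub_of_le_fderiv_apply hg hc htB (hline ▸ ht'B) (sub_nonneg.2 htt)
  rw [← hline] at hgrowth
  rw [Real.dist_eq, abs_sub_comm, abs_of_nonneg (sub_nonneg.2 htt), le_div_iff₀ hc0]
  linarith [abs_le.1 htε, abs_le.1 ht'ε]

lemma volume_closedBall_inter_abs_le_le (hg : Differentiable ℝ g) (x₀ : Fin (n + 1) → ℝ)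
    {r : ℝ} (hr : 0 ≤ r) (hc0 : 0 < c)
    (hc : ∀ x ∈ closedBall x₀ r, c ≤ fderiv ℝ g x (Pi.single i 1)) (ε : ℝ) :
    volume (closedBall x₀ r ∩ {x | |g x| ≤ ε}) ≤
      ENNReal.ofReal (2 * ε / c) * ENNReal.ofReal ((2 * r) ^ n) := by
  set A := closedBall x₀ r ∩ {x | |g x| ≤ ε}
  have hA : MeasurableSet A :=
    (isClosed_closedBall.inter (isClosed_le hg.continuous.abs continuous_const)).measurableSet
  set e := MeasurableEquiv.piFinSuccAbove (fun _ : Fin (n + 1) => ℝ) i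
  have hvol : volume A = (volume.prod volume) (e.symm ⁻¹' A) := by
    rw [← Measure.volume_eq_prod,
      ((volume_preserving_piFinSuccAbove _ i).symm e).measure_preimage_equiv]
  have hslice : ∀ y, volume {t | i.insertNth t y ∈ A} ≤
      (closedBall (i.removeNth x₀) r).indicator (fun _ => ENNReal.ofReal (2 * ε / c)) y := by
    intro y
    rcases eq_empty_or_nonempty {t | i.insertNth t y ∈ A} with hempty | ⟨t₀, ht₀⟩
    · simp [hempty]
    have hy : y ∈ closedBall (i.removeNth x₀) r := by
      have := ht₀.1
      rw [mem_closedBall, ← Fin.insertNth_self_removeNth i x₀, Fin.dist_insertNth_insertNth] at this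
      exact (le_max_right _ _).trans this
    rw [indicator_of_mem hy]
    refine (Real.volume_le_diam _).trans (Metric.ediam_le fun t ht t' ht' => ?_)
    rw [edist_dist]
    exact ENNReal.ofReal_le_ofReal <|
      (convex_closedBall x₀ r).dist_le_of_abs_le_of_le_fderiv_apply_single hg hc0 hc ht ht'
  calc volume A = ∫⁻ y, volume {t | i.insertNth t y ∈ A} := by
        rw [hvol, Measure.prod_apply_symm (e.symm.measurable hA)]
        rfl
    _ ≤ ∫⁻ y, (closedBall (i.removeNth x₀) r).indicator
          (fun _ => ENNReal.ofReal (2 * ε / c)) y := lintegral_mono hslice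
    _ = ENNReal.ofReal (2 * ε / c) * ENNReal.ofReal ((2 * r) ^ n) := by
        rw [lintegral_indicator_const measurableSet_closedBall, Real.volume_pi_closedBall _ hr,
          Fintype.card_fin]

end Slices

lemma exists_volume_closedBall_inter_abs_le_le {N : ℕ} {g : (Fin N → ℝ) → ℝ}
    (hg : ContDiff ℝ 1 g) {x₀ : Fin N → ℝ} (hx₀ : fderiv ℝ g x₀ ≠ 0) :
    ∃ r > 0, ∃ C : ℝ≥0, ∀ ε, volume (closedBall x₀ r ∩ {x | |g x| ≤ ε}) ≤ C * ENNReal.ofReal ε := by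
  obtain ⟨i, hi⟩ := exists_apply_single_ne_zero hx₀
  obtain ⟨n, rfl⟩ := Nat.exists_eq_add_one_of_ne_zero i.pos.ne'
  wlog hpos : 0 < fderiv ℝ g x₀ (Pi.single i 1) generalizing g
  · have hneg : fderiv ℝ (-g) x₀ = -fderiv ℝ g x₀ := fderiv_neg
    simpa using this hg.neg (by simpa [hneg] using hx₀) (by simpa [hneg] using hi)
      (by simp; exact lt_of_le_of_ne (not_lt.1 hpos) hi)
  set c := fderiv ℝ g x₀ (Pi.single i 1) / 2
  have hc0 : 0 < c := half_pos hpos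
  have hnear : ∀ᶠ x in 𝓝 x₀, c ≤ fderiv ℝ g x (Pi.single i 1) :=
    ((hg.continuous_fderiv one_ne_zero).clm_apply continuous_const).continuousAt.eventually
      (eventually_ge_nhds (half_lt_self hpos))
  obtain ⟨r, hr, hball⟩ := nhds_basis_closedBall.eventually_iff.1 hnear
  refine ⟨r, hr, (2 / c * (2 * r) ^ n).toNNReal, fun ε => ?_⟩
  refine (volume_closedBall_inter_abs_le_le (hg.differentiable one_ne_zero) x₀ hr.le hc0
    (fun x hx => hball hx) ε).trans_eq ?_
  rw [← ENNReal.ofReal_mul' (by positivity), ENNReal.ofNNReal_toNNReal,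
    ← ENNReal.ofReal_mul (by positivity)]
  ring_nf

theorem IsCompact.exists_measure_inter_abs_le_le {X : Type*} [TopologicalSpace X]
    [MeasurableSpace X] {μ : Measure X} {K : Set X} (hK : IsCompact K) {g : X → ℝ}
    (hg : Continuous g)
    (hloc : ∀ x ∈ K, g x = 0 →
      ∃ U ∈ 𝓝 x, ∃ C : ℝ≥0, ∀ ε, μ (U ∩ {y | |g y| ≤ ε}) ≤ C * ENNReal.ofReal ε) :
    ∃ C : ℝ≥0, ∃ ε₀ > 0, ∀ ε ≤ ε₀, μ (K ∩ {x | |g x| ≤ ε}) ≤ C * ENNReal.ofReal ε := by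
  choose! U hU C hC using hloc
  obtain ⟨t, htZ, hcover⟩ := (hK.inter_right (isClosed_singleton.preimage hg)).elim_nhds_subcover
    (fun x => interior (U x)) (fun x hx => interior_mem_nhds.2 (hU x hx.1 hx.2))
  set V := ⋃ x ∈ t, interior (U x)
  obtain ⟨δ, hδ, hgδ⟩ := (hK.diff (isOpen_biUnion fun x _ => isOpen_interior)).exists_forall_le'
    hg.abs.continuousOn (a := 0) fun x hx =>
      abs_pos.2 fun hgx => hx.2 (hcover ⟨hx.1, hgx⟩)
  refine ⟨∑ x ∈ t, C x, δ / 2, half_pos hδ, fun ε hε => ?_⟩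
  have hsub : K ∩ {x | |g x| ≤ ε} ⊆ ⋃ x ∈ t, U x ∩ {y | |g y| ≤ ε} := by
    rintro y ⟨hyK, hyε : |g y| ≤ ε⟩
    by_cases hyV : y ∈ V
    · obtain ⟨x, hx, hyU⟩ := mem_iUnion₂.1 hyV
      exact mem_iUnion₂.2 ⟨x, hx, interior_subset hyU, hyε⟩
    · linarith [hgδ y ⟨hyK, hyV⟩]
  calc μ (K ∩ {x | |g x| ≤ ε}) ≤ ∑ x ∈ t, μ (U x ∩ {y | |g y| ≤ ε}) :=
        (measure_mono hsub).trans (measure_biUnion_finset_le _ _)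
    _ ≤ ∑ x ∈ t, C x * ENNReal.ofReal ε :=
        Finset.sum_le_sum fun x hx => hC x (htZ x hx).1 (htZ x hx).2 ε
    _ = (∑ x ∈ t, C x : ℝ≥0) * ENNReal.ofReal ε := by
        rw [ENNReal.ofNNReal_finsetSum, Finset.sum_mul]

theorem statement9_general (N : ℕ) (g : (Fin N → ℝ) → ℝ)
    (hg : ContDiff ℝ 1 g)
    (hreg : ∀ x : Fin N → ℝ, g x = 0 → fderiv ℝ g x ≠ 0) :
    ∃ C : ℝ, 0 < C ∧ ∃ ε₀ : ℝ, 0 < ε₀ ∧ ∀ ε : ℝ, 0 < ε → ε ≤ ε₀ →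
      volume {x : Fin N → ℝ | (∀ i, x i ∈ Set.Icc (0 : ℝ) 1) ∧ |g x| ≤ ε} ≤
        ENNReal.ofReal (C * ε) := by
  obtain ⟨C, ε₀, hε₀, hC⟩ :=
    (isCompact_univ_pi fun _ => isCompact_Icc).exists_measure_inter_abs_le_le
      (μ := volume) hg.continuous fun x _ hx => by
        obtain ⟨r, hr, C, hC⟩ := exists_volume_closedBall_inter_abs_le_le hg (hreg x hx)
        exact ⟨closedBall x r, closedBall_mem_nhds x hr, C, hC⟩
  refine ⟨C + 1, by positivity, ε₀, hε₀, fun ε _ hεε₀ => ?_⟩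
  calc volume {x : Fin N → ℝ | (∀ i, x i ∈ Set.Icc (0 : ℝ) 1) ∧ |g x| ≤ ε}
      ≤ volume (univ.pi (fun _ => Icc (0 : ℝ) 1) ∩ {x | |g x| ≤ ε}) :=
        measure_mono fun x hx => ⟨fun i _ => hx.1 i, hx.2⟩
    _ ≤ C * ENNReal.ofReal ε := hC ε hεε₀
    _ ≤ ENNReal.ofReal ((C + 1) * ε) := by
        rw [ENNReal.ofReal_mul (by positivity), ← ENNReal.ofReal_coe_nnreal]
        gcongr
        exact le_add_of_nonneg_right zero_le_one

/-- If `g : ℝ^N → ℝ` is `C¹`, `ℤ^N`-periodic, and has `0` as a regular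
value (no `x` with `g x = 0` and `∇g x = 0`), then there are `Ĉ > 0` and `ε̂ > 0` such that
for every `0 < ε ≤ ε̂`, `Leb{x ∈ [0,1]^N : |g x| ≤ ε} ≤ Ĉ ε`. -/
theorem statement9 (N : ℕ) (hN : 1 ≤ N) (g : (Fin N → ℝ) → ℝ)
    (hg : ContDiff ℝ 1 g)
    (hper : ∀ (x : Fin N → ℝ) (k : Fin N → ℤ), g (x + fun i => (k i : ℝ)) = g x)
    (hreg : ∀ x : Fin N → ℝ, g x = 0 → fderiv ℝ g x ≠ 0) :
    ∃ C : ℝ, 0 < C ∧ ∃ ε₀ : ℝ, 0 < ε₀ ∧ ∀ ε : ℝ, 0 < ε → ε ≤ ε₀ →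
      volume {x : Fin N → ℝ | (∀ i, x i ∈ Set.Icc (0 : ℝ) 1) ∧ |g x| ≤ ε} ≤
        ENNReal.ofReal (C * ε) :=
  statement9_general N g hg hreg
end

section
/- Let N ≥ 1 and let ψ, φ : ℝ^N → ℝ^N be C² maps that are ℤ^N-periodic (ψ(x+k) = ψ(x) and φ(x+k) = φ(x) for all k ∈ ℤ^N). Assume the transversality condition: there is no x ∈ ℝ^N with det Dψ(x) = 0 and D(det Dψ)(x) = 0 simultaneously (i.e. 0 is a regular value of x ↦ det Dψ(x)). Then for every β ∈ (0,1) there exist constants C_β > 0 and L₀ > 0 such that for all L ≥ L₀, the Lebesgue measure of the set {x ∈ [0,1]^N : |det(Dψ(x) + L^{-1}·Dφ(x))| ≤ L^{−(1−β)}} is at most C_β·L^{−(1−β)}. -/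
/-!
Let `g = det Dψ`. Near the zero set of `g` in the cube the gradient of `g` does not vanish, so
around each such point some partial derivative `∂ᵢ g` keeps a sign and stays away from `0` on a
ball; integrating along the `i`-th coordinate (Fubini), every line meets `{|g| ≤ ε}` in length
`O(ε)`, and a finite subcover of the compact set `{x ∈ [0,1]^N : |g x| ≤ δ}` gives
`Leb{x ∈ [0,1]^N : |g x| ≤ ε} = O(ε)` for `ε ≤ δ`. Since `det (Dψ + t Dφ) - det Dψ = O(t)`
uniformly on the cube, the set in question lies in `{|g| ≤ L^(-(1-β)) + O(L⁻¹)}`, and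
`L⁻¹ = o(L^(-(1-β)))`.
-/

open MeasureTheory Set Filter Topology Metric
open scoped ENNReal NNReal

theorem MeasureTheory.Measure.prod_apply_le_mul_of_forall_preimage_le {α β : Type*}
    [MeasurableSpace α] [MeasurableSpace β] {μ : Measure α} {ν : Measure β} [SFinite μ]
    [SFinite ν] {A : Set (α × β)} (hA : MeasurableSet A) {P : Set β} (hP : MeasurableSet P)
    (hAP : ∀ p ∈ A, p.2 ∈ P) {δ : ℝ≥0∞} (hδ : ∀ y ∈ P, μ ((·, y) ⁻¹' A) ≤ δ) :
    μ.prod ν A ≤ δ * ν P := by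
  rw [Measure.prod_apply_symm hA, ← lintegral_indicator_const hP]
  refine lintegral_mono fun y => ?_
  by_cases hy : y ∈ P
  · simpa [hy] using hδ y hy
  · have : (·, y) ⁻¹' A = ∅ := eq_empty_of_forall_notMem fun t ht => hy (hAP _ ht)
    simp [hy, this]

theorem Real.volume_abs_le_le_of_le_deriv {u : ℝ → ℝ} {D : Set ℝ} (hD : Convex ℝ D)
    (hDo : IsOpen D) (hu : DifferentiableOn ℝ u D) {c : ℝ} (hc : 0 < c)
    (hu' : ∀ t ∈ D, c ≤ deriv u t) (ε : ℝ) :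
    volume {t ∈ D | |u t| ≤ ε} ≤ ENNReal.ofReal (2 * ε / c) := by
  refine (Real.volume_le_diam _).trans (ediam_le fun s hs t ht => ?_)
  wlog hst : s ≤ t generalizing s t
  · rw [edist_comm]
    exact this t ht s hs (le_of_not_ge hst)
  have hmono := hD.mul_sub_le_image_sub_of_le_deriv hu.continuousOn
    (by rwa [hDo.interior_eq]) (by rwa [hDo.interior_eq]) s hs.1 t ht.1 hst
  rw [edist_dist, Real.dist_eq, abs_sub_comm, abs_of_nonneg (sub_nonneg.2 hst)]
  refine ENNReal.ofReal_le_ofReal ((le_div_iff₀ hc).2 ?_)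
  linarith [abs_le.1 hs.2, abs_le.1 ht.2]

theorem Fin.insertNth_mem_ball_iff {n : ℕ} {i : Fin (n + 1)} {t : ℝ} {y : Fin n → ℝ}
    {x₀ : Fin (n + 1) → ℝ} {r : ℝ} (hr : 0 < r) :
    Fin.insertNth i t y ∈ ball x₀ r ↔ t ∈ ball (x₀ i) r ∧ y ∈ ball (x₀ ∘ i.succAbove) r := by
  simp [ball_pi _ hr, Fin.forall_iff_succAbove i]

theorem volume_ball_inter_abs_le_le_of_le_fderiv {n : ℕ} {g : (Fin (n + 1) → ℝ) → ℝ}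
    (hg : Differentiable ℝ g) {x₀ : Fin (n + 1) → ℝ} {r : ℝ} (hr : 0 < r) {i : Fin (n + 1)}
    {c : ℝ} (hc : 0 < c) (hg' : ∀ y ∈ ball x₀ r, c ≤ fderiv ℝ g y (Pi.single i 1)) (ε : ℝ) :
    volume (ball x₀ r ∩ {y | |g y| ≤ ε}) ≤
      ENNReal.ofReal (2 * ε / c) * volume (ball (x₀ ∘ i.succAbove) r) := by
  set A := ball x₀ r ∩ {y | |g y| ≤ ε}
  have hA : MeasurableSet A :=
    isOpen_ball.measurableSet.inter (measurableSet_le hg.continuous.abs.measurable measurable_const)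
  have e := (volume_preserving_piFinSuccAbove (fun _ => ℝ) i).symm
  rw [← e.measure_preimage hA.nullMeasurableSet, Measure.volume_eq_prod]
  refine Measure.prod_apply_le_mul_of_forall_preimage_le (e.measurable hA) measurableSet_ball
    (fun p hp => ?_) fun y hy => ?_
  · have : Fin.insertNth i p.1 p.2 ∈ ball x₀ r := hp.1
    exact ((Fin.insertNth_mem_ball_iff hr).1 this).2
  set a : Fin (n + 1) → ℝ := Fin.insertNth i 0 y
  have hline : ∀ t, Fin.insertNth i t y = Function.update a i t := fun t => by
    simp [a, Fin.update_insertNth]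
  have hsec : (·, y) ⁻¹' ((MeasurableEquiv.piFinSuccAbove (fun _ => ℝ) i).symm ⁻¹' A) =
      {t ∈ ball (x₀ i) r | |g (Fin.insertNth i t y)| ≤ ε} := by
    ext t
    simp [A, Fin.insertNthEquiv, Fin.insertNth_mem_ball_iff hr, hy]
  have hderiv : ∀ t, HasDerivAt (fun t => g (Fin.insertNth i t y))
      (fderiv ℝ g (Fin.insertNth i t y) (Pi.single i 1)) t := fun t => by
    simp only [hline]
    exact (hg _).hasFDerivAt.comp_hasDerivAt t (hasDerivAt_update a i t)
  rw [hsec]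
  refine Real.volume_abs_le_le_of_le_deriv (convex_ball _ _) isOpen_ball
    (fun t _ => (hderiv t).differentiableAt.differentiableWithinAt) hc (fun t ht => ?_) ε
  rw [(hderiv t).deriv]
  exact hg' _ ((Fin.insertNth_mem_ball_iff hr).2 ⟨ht, hy⟩)

theorem ContinuousLinearMap.exists_apply_single_ne_zero {ι : Type*} [Fintype ι] [DecidableEq ι]
    {f : (ι → ℝ) →L[ℝ] ℝ} (hf : f ≠ 0) : ∃ i, f (Pi.single i 1) ≠ 0 := by
  contrapose! hf
  ext v
  rw [zero_apply, ← Finset.univ_sum_single v, map_sum]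
  refine Finset.sum_eq_zero fun i _ => ?_
  rw [← mul_one (v i), ← smul_eq_mul, Pi.single_smul', map_smul, hf, smul_zero]

theorem exists_nhds_volume_inter_abs_le_le_of_fderiv_ne_zero {N : ℕ} {g : (Fin N → ℝ) → ℝ}
    (hg : ContDiff ℝ 1 g) {x : Fin N → ℝ} (hx : fderiv ℝ g x ≠ 0) :
    ∃ U ∈ 𝓝 x, ∃ C : ℝ≥0, ∀ ε, volume (U ∩ {y | |g y| ≤ ε}) ≤ C * ENNReal.ofReal ε := by
  obtain ⟨i, hi⟩ := ContinuousLinearMap.exists_apply_single_ne_zero hx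
  obtain ⟨n, rfl⟩ := Nat.exists_eq_add_one_of_ne_zero i.pos.ne'
  wlog hpos : 0 < fderiv ℝ g x (Pi.single i 1) generalizing g
  · have hneg : 0 < fderiv ℝ (-g) x (Pi.single i 1) := by
      rw [fderiv_neg]
      simpa using lt_of_le_of_ne (not_lt.1 hpos) hi
    simpa [abs_neg] using this hg.neg (by simpa using hx) (by simpa using hi) hneg
  set c := fderiv ℝ g x (Pi.single i 1) / 2
  have hc : 0 < c := half_pos hpos
  have hnear : ∀ᶠ y in 𝓝 x, c ≤ fderiv ℝ g y (Pi.single i 1) :=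
    ((hg.continuous_fderiv one_ne_zero).clm_apply continuous_const).continuousAt.eventually
      (le_mem_nhds (half_lt_self hpos))
  obtain ⟨r, hr, hball⟩ := Metric.eventually_nhds_iff_ball.1 hnear
  refine ⟨ball x r, ball_mem_nhds x hr,
    (ENNReal.ofReal (2 / c) * volume (ball (x ∘ i.succAbove) r)).toNNReal, fun ε => ?_⟩
  rw [ENNReal.coe_toNNReal (ENNReal.mul_ne_top ENNReal.ofReal_ne_top measure_ball_lt_top.ne)]
  calc volume (ball x r ∩ {y | |g y| ≤ ε})
      ≤ ENNReal.ofReal (2 * ε / c) * volume (ball (x ∘ i.succAbove) r) :=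
        volume_ball_inter_abs_le_le_of_le_fderiv (hg.differentiable one_ne_zero) hr hc hball ε
    _ = _ := by
        rw [mul_div_right_comm, ENNReal.ofReal_mul (by positivity), mul_right_comm]

theorem IsCompact.exists_measure_inter_le_of_forall_nhds {X ι : Type*} [TopologicalSpace X]
    [MeasurableSpace X] {μ : Measure X} {S : Set X} (hS : IsCompact S) {F : ι → Set X}
    {b : ι → ℝ≥0∞} (hloc : ∀ x ∈ S, ∃ U ∈ 𝓝 x, ∃ C : ℝ≥0, ∀ i, μ (U ∩ F i) ≤ C * b i) :
    ∃ C : ℝ≥0, ∀ i, μ (S ∩ F i) ≤ C * b i := by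
  choose U hU C hC using hloc
  obtain ⟨t, ht⟩ := hS.elim_nhds_subcover' U hU
  refine ⟨∑ x ∈ t, C x x.2, fun i => ?_⟩
  calc μ (S ∩ F i) ≤ μ (⋃ x ∈ t, U x x.2 ∩ F i) := measure_mono fun y ⟨hyS, hyF⟩ => by
        obtain ⟨x, hx, hy⟩ := mem_iUnion₂.1 (ht hyS)
        exact mem_iUnion₂.2 ⟨x, hx, hy, hyF⟩
    _ ≤ ∑ x ∈ t, μ (U x x.2 ∩ F i) := measure_biUnion_finset_le _ _
    _ ≤ ∑ x ∈ t, C x x.2 * b i := Finset.sum_le_sum fun x _ => hC x x.2 i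
    _ = (∑ x ∈ t, C x x.2 : ℝ≥0) * b i := by push_cast; rw [Finset.sum_mul]

theorem IsCompact.exists_pos_forall_abs_le_imp_ne_zero {X E : Type*} [TopologicalSpace X]
    [NormedAddCommGroup E] {K : Set X} (hK : IsCompact K) {f : X → ℝ} {h : X → E}
    (hf : Continuous f) (hh : Continuous h) (hfh : ∀ x ∈ K, f x = 0 → h x ≠ 0) :
    ∃ δ > 0, ∀ x ∈ K, |f x| ≤ δ → h x ≠ 0 := by
  rcases K.eq_empty_or_nonempty with rfl | hne
  · exact ⟨1, one_pos, by simp⟩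
  obtain ⟨x₀, hx₀, hmin⟩ := hK.exists_isMinOn hne (hf.abs.max hh.norm).continuousOn
  have hpos : 0 < max |f x₀| ‖h x₀‖ := by
    by_cases h0 : f x₀ = 0
    · exact lt_max_of_lt_right (norm_pos_iff.2 (hfh x₀ hx₀ h0))
    · exact lt_max_of_lt_left (abs_pos.2 h0)
  refine ⟨max |f x₀| ‖h x₀‖ / 2, half_pos hpos, fun x hx hfx hhx => ?_⟩
  have : max |f x₀| ‖h x₀‖ ≤ max |f x| ‖h x‖ := hmin hx
  rw [hhx, norm_zero, max_eq_left (abs_nonneg (f x))] at this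
  linarith

theorem IsCompact.exists_volume_abs_le_le_of_fderiv_ne_zero {N : ℕ} {K : Set (Fin N → ℝ)}
    (hK : IsCompact K) {g : (Fin N → ℝ) → ℝ} (hg : ContDiff ℝ 1 g)
    (hreg : ∀ x ∈ K, g x = 0 → fderiv ℝ g x ≠ 0) :
    ∃ δ > 0, ∃ C : ℝ≥0, ∀ ε ≤ δ, volume {x ∈ K | |g x| ≤ ε} ≤ C * ENNReal.ofReal ε := by
  obtain ⟨δ, hδ, hK'⟩ := hK.exists_pos_forall_abs_le_imp_ne_zero hg.continuous
    (hg.continuous_fderiv one_ne_zero) hreg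
  have hS : IsCompact {x ∈ K | |g x| ≤ δ} :=
    hK.inter_right (isClosed_le hg.continuous.abs continuous_const)
  obtain ⟨C, hC⟩ := hS.exists_measure_inter_le_of_forall_nhds (F := fun ε => {x | |g x| ≤ ε})
    (b := ENNReal.ofReal) fun x hx =>
      exists_nhds_volume_inter_abs_le_le_of_fderiv_ne_zero hg (hK' x hx.1 hx.2)
  refine ⟨δ, hδ, C, fun ε hε => (measure_mono ?_).trans (hC ε)⟩
  rintro x ⟨hx, hgx⟩
  exact ⟨⟨hx, hgx.trans hε⟩, hgx⟩

theorem ContDiff.fderiv_coord_apply {E ι : Type*} [NormedAddCommGroup E] [NormedSpace ℝ E]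
    [Fintype ι] {f : E → ι → ℝ} {n : WithTop ℕ∞} (hf : ContDiff ℝ (n + 1) f) (i : ι) (v : E) :
    ContDiff ℝ n fun x => fderiv ℝ (fun y => f y i) x v :=
  ((contDiff_pi.1 hf i).fderiv_right le_rfl).clm_apply contDiff_const

theorem ContDiff.matrix_det {E ι : Type*} [NormedAddCommGroup E] [NormedSpace ℝ E] [Fintype ι]
    [DecidableEq ι] {n : WithTop ℕ∞} {A : E → Matrix ι ι ℝ}
    (hA : ∀ i j, ContDiff ℝ n fun x => A x i j) : ContDiff ℝ n fun x => (A x).det := by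
  simp only [Matrix.det_apply']
  exact ContDiff.sum fun σ _ => contDiff_const.mul (contDiff_prod fun i _ => hA _ _)

theorem IsCompact.exists_abs_det_add_smul_sub_det_le {E ι : Type*} [NormedAddCommGroup E]
    [NormedSpace ℝ E] [Fintype ι] [DecidableEq ι] {A B : E → Matrix ι ι ℝ}
    (hA : ∀ i j, ContDiff ℝ 1 fun x => A x i j) (hB : ∀ i j, ContDiff ℝ 1 fun x => B x i j)
    {K : Set E} (hK : IsCompact K) :
    ∃ M : ℝ, ∀ x ∈ K, ∀ t ∈ Icc (0 : ℝ) 1, |(A x + t • B x).det - (A x).det| ≤ M * t := by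
  have hG : ContDiff ℝ 1 fun p : ℝ × E => (A p.2 + p.1 • B p.2).det :=
    ContDiff.matrix_det fun i j => by
      simpa using ((hA i j).comp contDiff_snd).add (contDiff_fst.mul ((hB i j).comp contDiff_snd))
  obtain ⟨M, hM⟩ := hG.locallyLipschitz.locallyLipschitzOn.exists_lipschitzOnWith_of_compact
    (isCompact_Icc.prod hK)
  refine ⟨M, fun x hx t ht => ?_⟩
  have := hM.dist_le_mul (t, x) ⟨ht, hx⟩ (0, x) ⟨left_mem_Icc.2 zero_le_one, hx⟩
  simpa [Prod.dist_eq, Real.dist_eq, abs_of_nonneg ht.1, max_eq_left ht.1] using this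

theorem IsCompact.exists_volume_abs_det_add_smul_le {N : ℕ} {K : Set (Fin N → ℝ)}
    (hK : IsCompact K) {A B : (Fin N → ℝ) → Matrix (Fin N) (Fin N) ℝ}
    (hA : ∀ i j, ContDiff ℝ 1 fun x => A x i j) (hB : ∀ i j, ContDiff ℝ 1 fun x => B x i j)
    (hreg : ∀ x ∈ K, (A x).det = 0 → fderiv ℝ (fun y => (A y).det) x ≠ 0) :
    ∃ δ > 0, ∃ M : ℝ, ∃ C : ℝ≥0, ∀ t ∈ Icc (0 : ℝ) 1, ∀ ε, ε + M * t ≤ δ →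
      volume {x ∈ K | |(A x + t • B x).det| ≤ ε} ≤ C * ENNReal.ofReal (ε + M * t) := by
  obtain ⟨δ, hδ, C, hC⟩ :=
    hK.exists_volume_abs_le_le_of_fderiv_ne_zero (ContDiff.matrix_det hA) hreg
  obtain ⟨M, hM⟩ := hK.exists_abs_det_add_smul_sub_det_le hA hB
  refine ⟨δ, hδ, M, C, fun t ht ε hε => (measure_mono ?_).trans (hC _ hε)⟩
  rintro x ⟨hx, hdet⟩
  refine ⟨hx, ?_⟩
  have := hM x hx t ht
  have := abs_sub_abs_le_abs_sub (A x).det (A x + t • B x).det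
  rw [abs_sub_comm] at this
  linarith

theorem statement10_general (N : ℕ) (ψ φ : (Fin N → ℝ) → Fin N → ℝ)
    (hψ : ContDiff ℝ 2 ψ) (hφ : ContDiff ℝ 2 φ)
    (Jψ Jφ : (Fin N → ℝ) → Matrix (Fin N) (Fin N) ℝ)
    (hJψ : ∀ (x : Fin N → ℝ) (i j : Fin N),
      Jψ x i j = fderiv ℝ (fun y => ψ y i) x (Pi.single j 1))
    (hJφ : ∀ (x : Fin N → ℝ) (i j : Fin N),
      Jφ x i j = fderiv ℝ (fun y => φ y i) x (Pi.single j 1))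
    (htrans : ∀ x : Fin N → ℝ, (Jψ x).det = 0 → fderiv ℝ (fun y => (Jψ y).det) x ≠ 0) :
    ∀ β : ℝ, β ∈ Set.Ioo (0 : ℝ) 1 →
      ∃ C : ℝ, 0 < C ∧ ∃ L₀ : ℝ, 0 < L₀ ∧ ∀ L : ℝ, L₀ ≤ L →
        volume {x : Fin N → ℝ |
            (∀ i, x i ∈ Set.Icc (0 : ℝ) 1) ∧
              |(Jψ x + L⁻¹ • Jφ x).det| ≤ L ^ (-(1 - β))} ≤
          ENNReal.ofReal (C * L ^ (-(1 - β))) := by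
  rintro β ⟨hβ0, hβ1⟩
  have hcube : IsCompact {x : Fin N → ℝ | ∀ i, x i ∈ Icc (0 : ℝ) 1} := by
    simpa [Set.pi] using isCompact_univ_pi fun _ : Fin N => isCompact_Icc (a := (0 : ℝ)) (b := 1)
  obtain ⟨δ, hδ, M, C, hC⟩ := hcube.exists_volume_abs_det_add_smul_le (A := Jψ) (B := Jφ)
    (fun i j => by simpa only [hJψ] using hψ.fderiv_coord_apply i (Pi.single j 1))
    (fun i j => by simpa only [hJφ] using hφ.fderiv_coord_apply i (Pi.single j 1))
    fun x _ => htrans x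
  have hev : ∀ᶠ L in atTop, 1 ≤ L ∧ 2 * L ^ (-(1 - β)) ≤ δ ∧ M ≤ L ^ β :=
    (eventually_ge_atTop 1).and <|
      (((tendsto_rpow_neg_atTop (by linarith)).const_mul 2).eventually
        (ge_mem_nhds (by simpa using hδ))).and ((tendsto_rpow_atTop hβ0).eventually_ge_atTop M)
  obtain ⟨L₀, hL₀⟩ := hev.exists_forall_of_atTop
  refine ⟨2 * C + 1, by positivity, max L₀ 1, by positivity, fun L hL => ?_⟩
  obtain ⟨hL1, hLδ, hLM⟩ := hL₀ L (le_of_max_le_left hL)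
  have hL0 : 0 < L := one_pos.trans_le hL1
  have hML : M * L⁻¹ ≤ L ^ (-(1 - β)) := calc
    M * L⁻¹ ≤ L ^ β * L ^ (-1 : ℝ) := by rw [Real.rpow_neg_one]; gcongr
    _ = L ^ (-(1 - β)) := by rw [← Real.rpow_add hL0]; ring_nf
  calc _ ≤ C * ENNReal.ofReal (L ^ (-(1 - β)) + M * L⁻¹) :=
        hC L⁻¹ ⟨by positivity, inv_le_one_of_one_le₀ hL1⟩ _ (by linarith)
    _ ≤ C * ENNReal.ofReal (2 * L ^ (-(1 - β))) := by gcongr; linarith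
    _ ≤ ENNReal.ofReal ((2 * C + 1) * L ^ (-(1 - β))) := by
        rw [← ENNReal.ofReal_coe_nnreal, ← ENNReal.ofReal_mul C.coe_nonneg]
        refine ENNReal.ofReal_le_ofReal ?_
        nlinarith [Real.rpow_pos_of_pos hL0 (-(1 - β))]

/-- Transversality criterion for (F2): if `ψ, φ : ℝ^N → ℝ^N` are `C²`,
`ℤ^N`-periodic, and `0` is a regular value of `x ↦ det Dψ(x)`, then for every `β ∈ (0,1)`
there are `C_β > 0` and `L₀ > 0` such that for all `L ≥ L₀`,
`Leb{x ∈ [0,1]^N : |det(Dψ(x) + L⁻¹ Dφ(x))| ≤ L^(-(1-β))} ≤ C_β L^(-(1-β))`. -/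
theorem statement10 (N : ℕ) (hN : 1 ≤ N) (ψ φ : (Fin N → ℝ) → Fin N → ℝ)
    (hψ : ContDiff ℝ 2 ψ) (hφ : ContDiff ℝ 2 φ)
    (hψper : ∀ (x : Fin N → ℝ) (k : Fin N → ℤ), ψ (x + fun i => (k i : ℝ)) = ψ x)
    (hφper : ∀ (x : Fin N → ℝ) (k : Fin N → ℤ), φ (x + fun i => (k i : ℝ)) = φ x)
    (Jψ Jφ : (Fin N → ℝ) → Matrix (Fin N) (Fin N) ℝ)
    (hJψ : ∀ (x : Fin N → ℝ) (i j : Fin N),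
      Jψ x i j = fderiv ℝ (fun y => ψ y i) x (Pi.single j 1))
    (hJφ : ∀ (x : Fin N → ℝ) (i j : Fin N),
      Jφ x i j = fderiv ℝ (fun y => φ y i) x (Pi.single j 1))
    (htrans : ∀ x : Fin N → ℝ, (Jψ x).det = 0 → fderiv ℝ (fun y => (Jψ y).det) x ≠ 0) :
    ∀ β : ℝ, β ∈ Set.Ioo (0 : ℝ) 1 →
      ∃ C : ℝ, 0 < C ∧ ∃ L₀ : ℝ, 0 < L₀ ∧ ∀ L : ℝ, L₀ ≤ L →
        volume {x : Fin N → ℝ |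
            (∀ i, x i ∈ Set.Icc (0 : ℝ) 1) ∧
              |(Jψ x + L⁻¹ • Jφ x).det| ≤ L ^ (-(1 - β))} ≤
          ENNReal.ofReal (C * L ^ (-(1 - β))) :=
  statement10_general N ψ φ hψ hφ Jψ Jφ hJψ hJφ htrans
end

section
/- Define h : ℝ² → ℝ by h(x₁, x₂) = cos(x₁)cos(x₂) + (cos(x₁) + cos(x₂))·cos(x₁ − x₂). Then 0 is a regular value of h: there is no (x₁, x₂) ∈ ℝ² satisfying simultaneously h(x₁,x₂) = 0, ∂h/∂x₁(x₁,x₂) = 0 and ∂h/∂x₂(x₁,x₂) = 0. Explicitly, no (x₁,x₂) ∈ ℝ² satisfies all three equations: cos x₁ cos x₂ + (cos x₁ + cos x₂)cos(x₁−x₂) = 0; −sin x₁ cos x₂ − sin x₁ cos(x₁−x₂) − (cos x₁ + cos x₂)sin(x₁−x₂) = 0; −sin x₂ cos x₁ − sin x₂ cos(x₁−x₂) + (cos x₁ + cos x₂)sin(x₁−x₂) = 0. -/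
/-- Algebraic core: the half-angle polynomial system has no real solutions. -/
lemma statement11_aux (a sa b sb : ℝ) (ha : sa ^ 2 + a ^ 2 = 1) (hb : sb ^ 2 + b ^ 2 = 1)
    (f1 : a ^ 2 + b ^ 2 - 1 + 2 * a * b * (2 * b ^ 2 - 1) = 0)
    (f2 : sa * (a + (2 * b ^ 2 - 1) * b) = 0)
    (f3 : sb * (b + a * (6 * b ^ 2 - 1)) = 0) : False := by
  rcases mul_eq_zero.mp f2 with hsa | g2
  · subst hsa
    have hA : a ^ 2 = 1 := by linear_combination ha
    rcases mul_eq_zero.mp f3 with hsb | g3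
    · subst hsb
      have hB : b ^ 2 = 1 := by linear_combination hb
      have hab : a * b = -1/2 := by
        linear_combination (1/2) * f1 - (1/2) * hA - (1/2) * hB - 2 * a * b * hB
      have h1' : a ^ 2 * b ^ 2 = 1 := by linear_combination b ^ 2 * hA + hB
      have h2' : a ^ 2 * b ^ 2 = 1/4 := by linear_combination (a * b - 1/2) * hab
      linarith
    · have k1 : a * b * (2 * b ^ 2 + 1) = 0 := by linear_combination b * g3 - f1 + hA
      have k2 : b ^ 2 * (2 * b ^ 2 + 1) = 0 := by
        linear_combination a * b * k1 - b ^ 2 * (2 * b ^ 2 + 1) * hA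
      have hb2 : b ^ 2 = 0 := by nlinarith [sq_nonneg b, sq_nonneg (b ^ 2)]
      have hb0 : b = 0 := by
        have := sq_nonneg b
        nlinarith [sq_abs b, abs_nonneg b]
      subst hb0
      have ha0 : a = 0 := by linear_combination -g3
      rw [ha0] at hA
      norm_num at hA
  · rcases mul_eq_zero.mp f3 with hsb | g3
    · subst hsb
      have hB : b ^ 2 = 1 := by linear_combination hb
      have ha' : a = -b := by linear_combination g2 - 2 * b * hB
      rw [ha'] at f1
      nlinarith [f1, hB, sq_nonneg (b ^ 2 - 1)]
    · have hF : 4 * b ^ 4 - 4 * b ^ 6 - 1 = 0 := by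
        linear_combination f1 - (a + 2 * b ^ 3 - b) * g2
      have hG : 2 * b ^ 4 - 3 * b ^ 6 = 0 := by
        linear_combination (b / 4) * g3 - (b * (6 * b ^ 2 - 1) / 4) * g2
      have h4 : b ^ 4 = 3/4 := by linear_combination (3/4) * hF - hG
      have h6 : b ^ 6 = 1/2 := by linear_combination (1/2) * hF - hG
      have h8 : b ^ 8 = 9/16 := by linear_combination (b ^ 4 + 3/4) * h4
      have h12a : b ^ 12 = 27/64 := by linear_combination b ^ 4 * h8 + (9/16) * h4
      have h12b : b ^ 12 = 1/4 := by linear_combination (b ^ 6 + 1/2) * h6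
      linarith

/-- The trigonometric system arising from the strongly coupled pair of
standard maps has no solutions: no `(x₁, x₂) ∈ ℝ²` satisfies simultaneously
`h = 0`, `∂h/∂x₁ = 0`, `∂h/∂x₂ = 0` where
`h(x₁,x₂) = cos x₁ cos x₂ + (cos x₁ + cos x₂) cos(x₁ - x₂)`. In particular `0` is a regular
value of `h`. -/
theorem statement11 (x₁ x₂ : ℝ) :
    ¬ (Real.cos x₁ * Real.cos x₂ + (Real.cos x₁ + Real.cos x₂) * Real.cos (x₁ - x₂) = 0 ∧
       -Real.sin x₁ * Real.cos x₂ - Real.sin x₁ * Real.cos (x₁ - x₂) -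
           (Real.cos x₁ + Real.cos x₂) * Real.sin (x₁ - x₂) = 0 ∧
       -Real.sin x₂ * Real.cos x₁ - Real.sin x₂ * Real.cos (x₁ - x₂) +
           (Real.cos x₁ + Real.cos x₂) * Real.sin (x₁ - x₂) = 0) := by
  rintro ⟨h1, h2, h3⟩
  set u : ℝ := (x₁ + x₂) / 2 with hu
  set v : ℝ := (x₁ - x₂) / 2 with hv
  have hc1 : Real.cos x₁ = Real.cos u * Real.cos v - Real.sin u * Real.sin v := by
    rw [← Real.cos_add]; congr 1; rw [hu, hv]; ring
  have hs1 : Real.sin x₁ = Real.sin u * Real.cos v + Real.cos u * Real.sin v := by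
    rw [← Real.sin_add]; congr 1; rw [hu, hv]; ring
  have hc2 : Real.cos x₂ = Real.cos u * Real.cos v + Real.sin u * Real.sin v := by
    rw [← Real.cos_sub]; congr 1; rw [hu, hv]; ring
  have hs2 : Real.sin x₂ = Real.sin u * Real.cos v - Real.cos u * Real.sin v := by
    rw [← Real.sin_sub]; congr 1; rw [hu, hv]; ring
  have hC : Real.cos (x₁ - x₂) = 2 * Real.cos v ^ 2 - 1 := by
    rw [show x₁ - x₂ = 2 * v by rw [hv]; ring, Real.cos_two_mul]
  have hS : Real.sin (x₁ - x₂) = 2 * Real.sin v * Real.cos v := by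
    rw [show x₁ - x₂ = 2 * v by rw [hv]; ring, Real.sin_two_mul]
  simp only [hc1, hs1, hc2, hs2, hC, hS] at h1 h2 h3
  have ha : Real.sin u ^ 2 + Real.cos u ^ 2 = 1 := Real.sin_sq_add_cos_sq u
  have hb : Real.sin v ^ 2 + Real.cos v ^ 2 = 1 := Real.sin_sq_add_cos_sq v
  refine statement11_aux (Real.cos u) (Real.sin u) (Real.cos v) (Real.sin v) ha hb ?_ ?_ ?_
  · linear_combination h1 + Real.sin v ^ 2 * ha + (1 - Real.cos u ^ 2) * hb
  · linear_combination (-1/2) * h2 + (-1/2) * h3 - Real.cos u * Real.sin u * hb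
  · linear_combination (-1/2) * h2 + (1/2) * h3 - Real.cos v * Real.sin v * ha
end

section
/- Let d ≥ 1, let U be a d×d real skew-symmetric matrix (Uᵀ = −U), and let ψ : ℝ → ℝ be a C^∞ function that is constant on [0, r₀] for some r₀ > 0. Define Φ : ℝ^d → ℝ^d by Φ(z) = exp(ψ(‖z‖)·U)·z, where exp denotes the matrix exponential. Then Φ is a bijection of ℝ^d onto itself with inverse z ↦ exp(−ψ(‖z‖)·U)·z, Φ is differentiable with |det DΦ(z)| = 1 at every z ∈ ℝ^d, and Φ preserves Lebesgue measure on ℝ^d. -/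
open MeasureTheory Matrix

open NormedSpace

namespace S14

variable {d : ℕ}

local notation "E" => EuclideanSpace ℝ (Fin d)
local notation "Mat" => Matrix (Fin d) (Fin d) ℝ

-- multiplication compatibility
lemma toEuc_mul (A B : Matrix (Fin d) (Fin d) ℝ) (z : E) :
    Matrix.toEuclideanLin A (Matrix.toEuclideanLin B z) = Matrix.toEuclideanLin (A * B) z := by
  rw [Matrix.toEuclideanLin_eq_toLin,
    Matrix.toLin_mul (PiLp.basisFun 2 ℝ (Fin d)) (PiLp.basisFun 2 ℝ (Fin d)) _ A B]
  rfl

lemma toEuc_one (z : E) : Matrix.toEuclideanLin (1 : Matrix (Fin d) (Fin d) ℝ) z = z := by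
  rw [Matrix.toEuclideanLin_eq_toLin, Matrix.toLin_one]
  rfl

-- orthogonality of exp of skew-symmetric
lemma orth (U : Matrix (Fin d) (Fin d) ℝ) (hU : Uᵀ = -U) (t : ℝ) :
    (exp (t • U))ᵀ * exp (t • U) = 1 := by
  have h1 : (t • U)ᵀ = -(t • U) := by rw [Matrix.transpose_smul, hU, smul_neg]
  rw [← Matrix.exp_transpose, h1,
    ← Matrix.exp_add_of_commute _ _ ((Commute.refl (t • U)).neg_left),
    neg_add_cancel, NormedSpace.exp_zero]

lemma inv_toEuc (U : Matrix (Fin d) (Fin d) ℝ) (t : ℝ) (z : E) :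
    Matrix.toEuclideanLin (exp (-(t • U))) (Matrix.toEuclideanLin (exp (t • U)) z) = z := by
  rw [toEuc_mul, ← Matrix.exp_add_of_commute _ _ ((Commute.refl (t • U)).neg_left),
    neg_add_cancel, NormedSpace.exp_zero, toEuc_one]

lemma norm_toEuc (M : Matrix (Fin d) (Fin d) ℝ) (hM : Mᵀ * M = 1) (z : E) :
    ‖Matrix.toEuclideanLin M z‖ = ‖z‖ := by
  have hadj : Matrix.toEuclideanLin Mᵀ = LinearMap.adjoint (Matrix.toEuclideanLin M) := by
    rw [← Matrix.conjTranspose_eq_transpose_of_trivial,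
      Matrix.toEuclideanLin_conjTranspose_eq_adjoint]
  have h2 : @inner ℝ _ _ (Matrix.toEuclideanLin M z) (Matrix.toEuclideanLin M z)
      = @inner ℝ _ _ z z := by
    rw [← LinearMap.adjoint_inner_left, ← hadj, toEuc_mul, hM, toEuc_one]
  have h3 : ‖Matrix.toEuclideanLin M z‖ ^ 2 = ‖z‖ ^ 2 := by
    rw [← real_inner_self_eq_norm_sq, ← real_inner_self_eq_norm_sq, h2]
  nlinarith [norm_nonneg (Matrix.toEuclideanLin M z), norm_nonneg z]




lemma g_fderiv (ψ : ℝ → ℝ) (hψ : ContDiff ℝ (⊤ : ℕ∞) ψ) (r₀ : ℝ) (hr₀ : 0 < r₀)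
    (hconst : ∀ s ∈ Set.Icc (0 : ℝ) r₀, ψ s = ψ 0) (z : E) :
    ∃ c : ℝ, HasFDerivAt (fun x : E => ψ ‖x‖) (c • (innerSL ℝ z : E →L[ℝ] ℝ)) z := by
  rcases lt_or_ge ‖z‖ r₀ with h | h
  · refine ⟨0, ?_⟩
    rw [zero_smul]
    have hev : (fun x : E => ψ ‖x‖) =ᶠ[nhds z] fun _ => ψ 0 := by
      filter_upwards [Metric.ball_mem_nhds z (show (0:ℝ) < r₀ - ‖z‖ by linarith)] with x hx
      have hx' : ‖x‖ < r₀ := by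
        have := norm_sub_norm_le x z
        rw [Metric.mem_ball, dist_eq_norm] at hx
        linarith
      exact hconst ‖x‖ ⟨norm_nonneg _, hx'.le⟩
    exact (hasFDerivAt_const (ψ 0) z).congr_of_eventuallyEq hev
  · have hz : z ≠ 0 := by
      intro h0; rw [h0, norm_zero] at h; linarith
    have hnd : DifferentiableAt ℝ (fun x : E => ‖x‖) z :=
      ((contDiffAt_norm ℝ (n := 1) hz).differentiableAt one_ne_zero)
    set D := fderiv ℝ (fun x : E => ‖x‖) z with hD
    have hDz : HasFDerivAt (fun x : E => ‖x‖) D z := hnd.hasFDerivAt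
    -- derivative of ‖x‖^2 two ways
    have h1 : HasFDerivAt (fun x : E => ‖x‖ ^ 2) (2 • (innerSL ℝ z : E →L[ℝ] ℝ)) z :=
      (hasStrictFDerivAt_norm_sq z).hasFDerivAt
    have h2 : HasFDerivAt (fun x : E => ‖x‖ ^ 2) (‖z‖ • D + ‖z‖ • D) z := by
      have := hDz.mul hDz
      simp only [pow_two]
      exact this
    have huniq := h2.unique h1
    have hDf : ∀ v : E, D v = ‖z‖⁻¹ * (inner ℝ z v : ℝ) := by
      intro v
      have := congrArg (fun (L : E →L[ℝ] ℝ) => L v) huniq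
      simp only [ContinuousLinearMap.add_apply, ContinuousLinearMap.smul_apply,
        innerSL_apply_apply, smul_eq_mul, nsmul_eq_mul, Nat.cast_ofNat] at this
      have hz' : ‖z‖ ≠ 0 := norm_ne_zero_iff.mpr hz
      have h3 : ‖z‖ * D v = (inner ℝ z v : ℝ) := by linarith
      rw [← h3, inv_mul_cancel_left₀ hz']
    refine ⟨deriv ψ ‖z‖ * ‖z‖⁻¹, ?_⟩
    have hψ' : HasDerivAt ψ (deriv ψ ‖z‖) ‖z‖ :=
      ((hψ.differentiable (by simp)) ‖z‖).hasDerivAt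
    have := hψ'.comp_hasFDerivAt z hDz
    refine this.congr_fderiv ?_
    symm
    ext v
    simp only [ContinuousLinearMap.coe_smul', Pi.smul_apply, innerSL_apply_apply, smul_eq_mul]
    rw [hDf v]
    ring





-- continuous linear map version of toEuclideanLin, as a linear map in the matrix argument
noncomputable def Lc : Mat →ₗ[ℝ] (E →L[ℝ] E) where
  toFun N := LinearMap.toContinuousLinearMap (Matrix.toEuclideanLin N)
  map_add' A B := by ext v; simp
  map_smul' c A := by ext v; simp

@[simp] lemma Lc_apply (N : Mat) (v : E) : Lc N v = Matrix.toEuclideanLin N v := rfl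

-- skew-symmetric gives inner z (U z) = 0
lemma inner_skew (U : Mat) (hU : Uᵀ = -U) (z : E) :
    (inner ℝ z (Matrix.toEuclideanLin U z) : ℝ) = 0 := by
  have hadj : Matrix.toEuclideanLin Uᵀ = LinearMap.adjoint (Matrix.toEuclideanLin U) := by
    rw [← Matrix.conjTranspose_eq_transpose_of_trivial,
      Matrix.toEuclideanLin_conjTranspose_eq_adjoint]
  have h1 : (inner ℝ z (Matrix.toEuclideanLin U z) : ℝ)
      = inner ℝ (Matrix.toEuclideanLin Uᵀ z) z := by
    rw [hadj, LinearMap.adjoint_inner_left]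
  rw [hU] at h1
  simp only [map_neg, LinearMap.neg_apply, inner_neg_left] at h1
  rw [real_inner_comm] at h1
  rw [real_inner_comm]
  linarith

lemma det_one_add_rank_one (φ : E →L[ℝ] ℝ) (u : E) :
    LinearMap.det (((1 + ContinuousLinearMap.smulRight φ u : E →L[ℝ] E)) : E →ₗ[ℝ] E)
      = 1 + φ u := by
  classical
  set b := PiLp.basisFun 2 ℝ (Fin d) with hb
  rw [← LinearMap.det_toMatrix b]
  have hm : LinearMap.toMatrix b b
        (((1 + ContinuousLinearMap.smulRight φ u : E →L[ℝ] E)) : E →ₗ[ℝ] E)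
      = 1 + Matrix.replicateCol (Fin 1) (fun i => u i) * Matrix.replicateRow (Fin 1) (fun j => φ (b j)) := by
    ext i j
    rw [LinearMap.toMatrix_apply]
    have hbj : (((1 + ContinuousLinearMap.smulRight φ u : E →L[ℝ] E)) : E →ₗ[ℝ] E) (b j)
        = b j + φ (b j) • u := by
      simp
    rw [hbj]
    have hrepr : ∀ (x : E) (i : Fin d), b.repr x i = x i := fun x i => by
      simp [hb, PiLp.basisFun_repr]
    rw [map_add, Finsupp.add_apply, hrepr, hrepr]
    have hbji : (b j) i = if i = j then (1:ℝ) else 0 := by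
      simp [hb, PiLp.basisFun_apply, EuclideanSpace.single_apply, Pi.single_apply, eq_comm]
    rw [hbji]
    simp [Matrix.one_apply, Matrix.mul_apply, Matrix.replicateCol_apply, Matrix.replicateRow_apply,
      PiLp.smul_apply, smul_eq_mul, mul_comm]
  rw [hm]
  refine (Matrix.det_one_add_replicateCol_mul_replicateRow (ι := Fin 1) _ _).trans ?_
  congr 1
  conv_rhs => rw [← b.sum_repr u]
  rw [map_sum]
  simp [dotProduct, hb, PiLp.basisFun_repr, mul_comm]

lemma abs_det_exp (U : Mat) (hU : Uᵀ = -U) (t : ℝ) : |Matrix.det (exp (t • U))| = 1 := by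
  have h := congrArg Matrix.det (orth U hU t)
  rw [Matrix.det_mul, Matrix.det_transpose, Matrix.det_one] at h
  rcases mul_self_eq_one_iff.mp h with h1 | h1 <;> rw [h1] <;> norm_num

lemma det_toEuc (M : Mat) : LinearMap.det (Matrix.toEuclideanLin M) = M.det := by
  rw [Matrix.toEuclideanLin_eq_toLin, LinearMap.det_toLin]

lemma main_deriv (U : Mat) (hU : Uᵀ = -U) (ψ : ℝ → ℝ) (hψ : ContDiff ℝ (⊤ : ℕ∞) ψ)
    (r₀ : ℝ) (hr₀ : 0 < r₀) (hconst : ∀ s ∈ Set.Icc (0:ℝ) r₀, ψ s = ψ 0) (z : E) :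
    ∃ D : E →L[ℝ] E,
      HasFDerivAt (fun x : E => Matrix.toEuclideanLin (exp (ψ ‖x‖ • U)) x) D z ∧
      |LinearMap.det (D : E →ₗ[ℝ] E)| = 1 := by
  letI : SeminormedRing Mat := Matrix.linftyOpSemiNormedRing
  letI : NormedRing Mat := Matrix.linftyOpNormedRing
  letI : NormedAlgebra ℝ Mat := Matrix.linftyOpNormedAlgebra
  obtain ⟨c, hc⟩ := g_fderiv ψ hψ r₀ hr₀ hconst z
  have hM : HasDerivAt (fun t : ℝ => exp (t • U)) (exp (ψ ‖z‖ • U) * U) (ψ ‖z‖) :=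
    hasDerivAt_exp_smul_const U (ψ ‖z‖)
  set Lcl : Mat →L[ℝ] (E →L[ℝ] E) := LinearMap.toContinuousLinearMap (Lc (d := d)) with hLcl
  have hT : HasDerivAt (fun t : ℝ => Lcl (exp (t • U))) (Lcl (exp (ψ ‖z‖ • U) * U)) (ψ ‖z‖) :=
    Lcl.hasFDerivAt.comp_hasDerivAt (ψ ‖z‖) hM
  have hT' : HasFDerivAt (fun t : ℝ => Lcl (exp (t • U)))
      ((1 : ℝ →L[ℝ] ℝ).smulRight (Lcl (exp (ψ ‖z‖ • U) * U))) (ψ ‖z‖) :=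
    hasDerivAt_iff_hasFDerivAt.mp hT
  have hc' := hT'.comp z hc
  have hid : HasFDerivAt (fun x : E => x) (ContinuousLinearMap.id ℝ (EuclideanSpace ℝ (Fin d))) z :=
    hasFDerivAt_id z
  have hΦ := hc'.clm_apply hid
  set A := Lcl (exp (ψ ‖z‖ • U)) with hA
  set φ : E →L[ℝ] ℝ := c • (innerSL ℝ z : E →L[ℝ] ℝ) with hφ
  set u : E := Matrix.toEuclideanLin U z with hu
  refine ⟨A.comp (1 + ContinuousLinearMap.smulRight φ u), ?_, ?_⟩
  · have hAu : A u = Lcl (exp (ψ ‖z‖ • U) * U) z := by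
      rw [hA, hu]
      exact toEuc_mul _ _ z
    refine hΦ.congr_fderiv ?_
    symm
    ext v
    simp only [ContinuousLinearMap.add_apply, ContinuousLinearMap.comp_apply,
      ContinuousLinearMap.coe_id', id_eq, ContinuousLinearMap.flip_apply,
      ContinuousLinearMap.smul_apply, ContinuousLinearMap.one_apply,
      ContinuousLinearMap.smulRight_apply, map_add, _root_.map_smul]
    rw [hAu]
    rfl
  · rw [ContinuousLinearMap.toLinearMap_comp, LinearMap.det_comp]
    have h1 : LinearMap.det (A : E →ₗ[ℝ] E) = (exp (ψ ‖z‖ • U)).det := by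
      rw [hA]
      show LinearMap.det ((LinearMap.toContinuousLinearMap
        (Matrix.toEuclideanLin (exp (ψ ‖z‖ • U)))) : E →ₗ[ℝ] E) = _
      rw [LinearMap.coe_toContinuousLinearMap, det_toEuc]
    have h2 := det_one_add_rank_one (d := d) φ u
    have hφu : φ u = 0 := by
      rw [hφ]
      simp only [ContinuousLinearMap.smul_apply, innerSL_apply_apply, smul_eq_mul, hu,
        inner_skew U hU z, mul_zero]
    rw [abs_mul, h1, h2, hφu, abs_det_exp U hU]
    norm_num

end S14

/-- Localized rotations are volume-preserving diffeomorphisms: for `U`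
skew-symmetric and `ψ : ℝ → ℝ` smooth and constant near `0`, the map
`Φ(z) = exp(ψ(‖z‖) U) z` on Euclidean `ℝ^d` is a bijection with inverse
`z ↦ exp(-ψ(‖z‖) U) z`, is differentiable with `|det DΦ(z)| = 1` everywhere, and preserves
Lebesgue measure. -/
theorem statement14 (d : ℕ) (hd : 1 ≤ d)
    (U : Matrix (Fin d) (Fin d) ℝ) (hU : Uᵀ = -U)
    (ψ : ℝ → ℝ) (hψ : ContDiff ℝ (⊤ : ℕ∞) ψ)
    (r₀ : ℝ) (hr₀ : 0 < r₀) (hconst : ∀ s ∈ Set.Icc (0 : ℝ) r₀, ψ s = ψ 0)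
    (Φ Ψ : EuclideanSpace ℝ (Fin d) → EuclideanSpace ℝ (Fin d))
    (hΦ : ∀ z, Φ z = Matrix.toEuclideanLin (NormedSpace.exp (ψ ‖z‖ • U)) z)
    (hΨ : ∀ z, Ψ z = Matrix.toEuclideanLin (NormedSpace.exp ((-ψ ‖z‖) • U)) z) :
    Function.Bijective Φ ∧
    Function.LeftInverse Ψ Φ ∧ Function.RightInverse Ψ Φ ∧
    (∀ z, DifferentiableAt ℝ Φ z) ∧
    (∀ z, |LinearMap.det ((fderiv ℝ Φ z :
        EuclideanSpace ℝ (Fin d) →L[ℝ] EuclideanSpace ℝ (Fin d)) :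
        EuclideanSpace ℝ (Fin d) →ₗ[ℝ] EuclideanSpace ℝ (Fin d))| = 1) ∧
    MeasurePreserving Φ volume volume := by
  classical
  have hΦfun : Φ = fun z => Matrix.toEuclideanLin (NormedSpace.exp (ψ ‖z‖ • U)) z :=
    funext hΦ
  have hΨfun : Ψ = fun z => Matrix.toEuclideanLin
      (NormedSpace.exp (((fun s => -ψ s) ‖z‖) • U)) z := funext hΨ
  have hnormΦ : ∀ z, ‖Φ z‖ = ‖z‖ := by
    intro z; rw [hΦ z]; exact S14.norm_toEuc _ (S14.orth U hU (ψ ‖z‖)) z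
  have hnormΨ : ∀ z, ‖Ψ z‖ = ‖z‖ := by
    intro z; rw [hΨ z]; exact S14.norm_toEuc _ (S14.orth U hU (-ψ ‖z‖)) z
  have hLI : Function.LeftInverse Ψ Φ := by
    intro z
    rw [hΨ (Φ z), hnormΦ z, hΦ z, neg_smul]
    exact S14.inv_toEuc U (ψ ‖z‖) z
  have hRI : Function.RightInverse Ψ Φ := by
    intro z
    rw [hΦ (Ψ z), hnormΨ z, hΨ z]
    have h2 : ψ ‖z‖ • U = -((-ψ ‖z‖) • U) := by rw [neg_smul, neg_neg]
    rw [h2]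
    exact S14.inv_toEuc U (-ψ ‖z‖) z
  have hderΦ : ∀ z, ∃ D : EuclideanSpace ℝ (Fin d) →L[ℝ] EuclideanSpace ℝ (Fin d),
      HasFDerivAt Φ D z ∧ |LinearMap.det (D : EuclideanSpace ℝ (Fin d) →ₗ[ℝ]
        EuclideanSpace ℝ (Fin d))| = 1 := by
    intro z
    obtain ⟨D, hD, hdet⟩ := S14.main_deriv U hU ψ hψ r₀ hr₀ hconst z
    exact ⟨D, hΦfun ▸ hD, hdet⟩
  have hderΨ : ∀ z, ∃ D : EuclideanSpace ℝ (Fin d) →L[ℝ] EuclideanSpace ℝ (Fin d),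
      HasFDerivAt Ψ D z ∧ |LinearMap.det (D : EuclideanSpace ℝ (Fin d) →ₗ[ℝ]
        EuclideanSpace ℝ (Fin d))| = 1 := by
    intro z
    obtain ⟨D, hD, hdet⟩ := S14.main_deriv U hU (fun s => -ψ s) hψ.neg r₀ hr₀
      (fun s hs => by simp [hconst s hs]) z
    exact ⟨D, hΨfun ▸ hD, hdet⟩
  have hdiff : ∀ z, DifferentiableAt ℝ Φ z :=
    fun z => ((hderΦ z).choose_spec.1).differentiableAt
  have hdet : ∀ z, |LinearMap.det ((fderiv ℝ Φ z :
      EuclideanSpace ℝ (Fin d) →L[ℝ] EuclideanSpace ℝ (Fin d)) :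
      EuclideanSpace ℝ (Fin d) →ₗ[ℝ] EuclideanSpace ℝ (Fin d))| = 1 := by
    intro z
    obtain ⟨D, hD, h1⟩ := hderΦ z
    rw [hD.fderiv]
    exact h1
  have hcontΦ : Continuous Φ := by
    rw [continuous_iff_continuousAt]
    exact fun z => (hdiff z).continuousAt
  have hinjΨ : Function.Injective Ψ := by
    intro a b hab
    rw [← hRI a, ← hRI b, hab]
  have hmeas : ∀ s : Set (EuclideanSpace ℝ (Fin d)), MeasurableSet s →
      volume (Ψ '' s) = volume s := by
    intro s hs
    have h1 : ∀ x ∈ s, HasFDerivWithinAt Ψ ((hderΨ x).choose) s x :=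
      fun x _ => ((hderΨ x).choose_spec.1).hasFDerivWithinAt
    have h2 := MeasureTheory.lintegral_abs_det_fderiv_eq_addHaar_image volume hs h1
      (Function.Injective.injOn hinjΨ)
    rw [← h2]
    have h3 : ∀ x, ENNReal.ofReal |((hderΨ x).choose).det| = 1 := by
      intro x
      have heq : ((hderΨ x).choose).det = LinearMap.det
          (((hderΨ x).choose : EuclideanSpace ℝ (Fin d) →L[ℝ] EuclideanSpace ℝ (Fin d)) :
            EuclideanSpace ℝ (Fin d) →ₗ[ℝ] EuclideanSpace ℝ (Fin d)) := rfl
      rw [heq, (hderΨ x).choose_spec.2, ENNReal.ofReal_one]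
    simp only [h3]
    exact MeasureTheory.setLIntegral_one s
  refine ⟨⟨hLI.injective, hRI.surjective⟩, hLI, hRI, hdiff, hdet, ?_⟩
  refine ⟨hcontΦ.measurable, ?_⟩
  refine Measure.ext fun s hs => ?_
  rw [Measure.map_apply hcontΦ.measurable hs]
  have hpre : Φ ⁻¹' s = Ψ '' s := by
    ext x
    constructor
    · intro hx
      exact ⟨Φ x, hx, hLI x⟩
    · rintro ⟨y, hy, rfl⟩
      show Φ (Ψ y) ∈ s
      rw [hRI y]
      exact hy
  rw [hpre]
  exact hmeas s hs
end
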